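/- arXiv:1907.11672 — 11 statements merged into one kernel-verified Lean document; each statement's English description precedes it below -/
import Mathlib

section
/- Let (x, p) be a solution to the Eisenberg–Gale program with budgets e, let Δ be an optimal transfer for (x, p), and set δ_i = Σ_k p_k·Δ_{ik} for each agent i. If e_i + δ_i > 0 for every agent i, then (x + Δ, p) is a solution to the Eisenberg–Gale program with budgets e + δ; in particular, v_i(x_i + Δ_i)/(e_i + δ_i) = r_i for every agent i. -/
open Finset

/-- `X` is a fractional allocation of `m` divisible items to `n` agents. -/
def IsAlloc {n m : ℕ} (X : Fin n → Fin m → ℝ) : Prop :=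
  (∀ i j, X i j ∈ Set.Icc (0 : ℝ) 1) ∧ ∀ j, ∑ i, X i j = 1

/-- Agent `i`'s additive value for a fractional bundle `y`. -/
def val {n m : ℕ} (v : Fin n → Fin m → ℝ) (i : Fin n) (y : Fin m → ℝ) : ℝ :=
  ∑ k, v i k * y k

/-- `(x, p)` is a solution to the Eisenberg–Gale program with budgets `e`:
`e` and `p` are positive, `x` is a fractional allocation giving every agent positive
utility, and the KKT conditions hold. -/
def EGSolution {n m : ℕ} (v : Fin n → Fin m → ℝ) (e : Fin n → ℝ) (p : Fin m → ℝ)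
    (x : Fin n → Fin m → ℝ) : Prop :=
  (∀ i, 0 < e i) ∧ (∀ j, 0 < p j) ∧ IsAlloc x ∧ (∀ i, 0 < val v i (x i)) ∧
  (∀ j, ∑ i, x i j = 1) ∧
  (∀ i j, v i j / p j ≤ val v i (x i) / e i) ∧
  (∀ i j, 0 < x i j → v i j / p j = val v i (x i) / e i)

/-- `Δ` is an optimal transfer for the solution `(x, p)`: the total allocation of each
item is unchanged, `x + Δ` is feasible, and any agent receiving more of an item has
maximum bang-per-buck `r_i = v_i(x_i)/e_i` for it. -/
def OptimalTransfer {n m : ℕ} (v : Fin n → Fin m → ℝ) (e : Fin n → ℝ)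
    (p : Fin m → ℝ) (x : Fin n → Fin m → ℝ) (Δ : Fin n → Fin m → ℝ) : Prop :=
  (∀ k, ∑ i, Δ i k = 0) ∧
  (∀ i k, x i k + Δ i k ∈ Set.Icc (0 : ℝ) 1) ∧
  (∀ i k, 0 < Δ i k → v i k / p k = val v i (x i) / e i)

/-- If `(x, p)` is a solution to the Eisenberg–Gale program with budgets `e`, `Δ` is an
optimal transfer, `δ_i = Σ_k p_k·Δ_{ik}`, and all the new budgets `e + δ` are positive,
then `(x + Δ, p)` is a solution to the Eisenberg–Gale program with budgets `e + δ`;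
in particular every agent's bang-per-buck ratio is unchanged. -/
theorem EG_optimal_transfer (n m : ℕ) (v : Fin n → Fin m → ℝ)
    (hv : ∀ i k, 0 ≤ v i k)
    (e : Fin n → ℝ) (p : Fin m → ℝ) (x : Fin n → Fin m → ℝ)
    (hEG : EGSolution v e p x)
    (Δ : Fin n → Fin m → ℝ) (hΔ : OptimalTransfer v e p x Δ)
    (δ : Fin n → ℝ) (hδ : ∀ i, δ i = ∑ k, p k * Δ i k)
    (hpos : ∀ i, 0 < e i + δ i) :
    EGSolution v (fun i => e i + δ i) p (fun i k => x i k + Δ i k) ∧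
      ∀ i, val v i (fun k => x i k + Δ i k) / (e i + δ i) = val v i (x i) / e i := by
  obtain ⟨he, hp, ⟨hxIcc, hxsum⟩, hval, hsum, hkkt2, hkkt3⟩ := hEG
  obtain ⟨hΔsum, hIcc, hΔbpb⟩ := hΔ
  -- key: per-item identity
  have key : ∀ i k, v i k * Δ i k = (val v i (x i) / e i) * (p k * Δ i k) := by
    intro i k
    rcases lt_trichotomy (Δ i k) 0 with h | h | h
    · have hx : 0 < x i k := by
        have := (hIcc i k).1
        linarith
      have hr := hkkt3 i k hx
      rw [(div_eq_iff (hp k).ne').mp hr]; ring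
    · simp [h]
    · have hr := hΔbpb i k h
      rw [(div_eq_iff (hp k).ne').mp hr]; ring
  have hnewval : ∀ i, val v i (fun k => x i k + Δ i k)
      = (val v i (x i) / e i) * (e i + δ i) := by
    intro i
    have h1 : val v i (fun k => x i k + Δ i k)
        = val v i (x i) + ∑ k, v i k * Δ i k := by
      simp only [_root_.val, mul_add, Finset.sum_add_distrib]
    have h2 : ∑ k, v i k * Δ i k = (val v i (x i) / e i) * δ i := by
      rw [hδ, Finset.mul_sum]
      exact Finset.sum_congr rfl fun k _ => key i k
    rw [h1, h2, mul_add, div_mul_cancel₀ _ (he i).ne']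
  have hratio : ∀ i, val v i (fun k => x i k + Δ i k) / (e i + δ i)
      = val v i (x i) / e i := by
    intro i
    rw [hnewval i, mul_div_assoc, div_self (hpos i).ne', mul_one]
  have hvalpos : ∀ i, 0 < val v i (fun k => x i k + Δ i k) := by
    intro i
    rw [hnewval i]
    exact mul_pos (div_pos (hval i) (he i)) (hpos i)
  have hs : ∀ j, ∑ i, (x i j + Δ i j) = 1 := by
    intro j
    rw [Finset.sum_add_distrib, hsum j, hΔsum j, add_zero]
  refine ⟨⟨hpos, hp, ⟨hIcc, hs⟩, hvalpos, hs, ?_, ?_⟩, hratio⟩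
  · intro i j
    rw [hratio i]
    exact hkkt2 i j
  · intro i j hxδ
    simp only at hxδ
    rw [hratio i]
    rcases lt_or_ge 0 (Δ i j) with h | h
    · exact hΔbpb i j h
    · exact hkkt3 i j (by linarith)
end

section
/- For every pair of agents i, j, the probability that v_i(A_j) − v_i(A_i) > 2·√(T·log T) is at most 4/T². In particular, for every ε > 0 there exists T₀ such that for all T ≥ T₀, with probability at least 1 − ε the pairwise envy max{v_i(A_j) − v_i(A_i), 0} is at most 2·√(T·log T), a quantity sublinear in T. -/
open Finset MeasureTheory ProbabilityTheory

/-- Agent `i`'s value for the (random) bundle received by agent `j`, when the `t`-th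
item has type `κ t ω` and is given to agent `a t ω`. -/
def bundleVal {n m T : ℕ} {Ω : Type} (v : Fin n → Fin m → ℝ) (κ : Fin T → Ω → Fin m)
    (a : Fin T → Ω → Fin n) (i j : Fin n) (ω : Ω) : ℝ :=
  ∑ t, if a t ω = j then v i (κ t ω) else 0

/-- `T` i.i.d. items, where each item's (type, recipient) pair is drawn with
probability `μ(k, i) = f_k·X_{ik}`: item values and recipients `(κ_t, a_t)` are
independent across `t`, with the given one-dimensional law. -/
def IIDRounding {n m T : ℕ} (f : Fin m → ℝ) (X : Fin n → Fin m → ℝ)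
    {Ω : Type} [MeasurableSpace Ω] (P : Measure Ω)
    (κ : Fin T → Ω → Fin m) (a : Fin T → Ω → Fin n) : Prop :=
  (∀ t, Measurable fun ω => (κ t ω, a t ω)) ∧
  iIndepFun (fun t ω => (κ t ω, a t ω)) P ∧
  (∀ t k i, P {ω | κ t ω = k ∧ a t ω = i} = ENNReal.ofReal (f k * X i k))

/-!
Each item contributes `v_i(κ_t)·(1[a_t = j] − 1[a_t = i]) ∈ [-1, 1]` to `v_i(A_j) − v_i(A_i)`,
independently across items, and envy-freeness of `X` for the scaled valuations says exactly
that the mean of this contribution is `≤ 0`. Hoeffding's inequality then bounds the probability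
that the sum exceeds `s` by `exp(−s²/(2T))`, which is `1/T²` at `s = 2√(T log T)`.
-/

lemma measureReal_sum_ge_le_of_iIndepFun_of_mem_Icc {ι Ω : Type*} [MeasurableSpace Ω]
    {μ : Measure Ω} [IsProbabilityMeasure μ] {Y : ι → Ω → ℝ} (hindep : iIndepFun Y μ)
    (hmeas : ∀ i, AEMeasurable (Y i) μ) {a b : ℝ} (hab : a ≤ b)
    (hbound : ∀ i, ∀ᵐ ω ∂μ, Y i ω ∈ Set.Icc a b) (hmean : ∀ i, μ[Y i] ≤ 0)
    (s : Finset ι) {ε : ℝ} (hε : 0 ≤ ε) :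
    μ.real {ω | ε ≤ ∑ i ∈ s, Y i ω} ≤ Real.exp (-2 * ε ^ 2 / (#s * (b - a) ^ 2)) := by
  have hcentered : iIndepFun (fun i ω ↦ Y i ω - μ[Y i]) μ :=
    hindep.comp (fun i y ↦ y - ∫ ω, Y i ω ∂μ) fun _ ↦ measurable_id.sub_const _
  have hoeffding := HasSubgaussianMGF.measure_sum_ge_le_of_iIndepFun hcentered (s := s)
    (fun i _ ↦ hasSubgaussianMGF_of_mem_Icc (hmeas i) (hbound i)) hε
  calc μ.real {ω | ε ≤ ∑ i ∈ s, Y i ω}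
      ≤ μ.real {ω | ε ≤ ∑ i ∈ s, (Y i ω - μ[Y i])} := by
        refine measureReal_mono fun ω hω ↦ ?_
        simp only [Set.mem_ofPred_eq, Finset.sum_sub_distrib] at hω ⊢
        linarith [Finset.sum_nonpos fun i (_ : i ∈ s) ↦ hmean i]
    _ ≤ _ := hoeffding
    _ = Real.exp (-2 * ε ^ 2 / (#s * (b - a) ^ 2)) := by
        rw [Finset.sum_const, nsmul_eq_mul]
        push_cast
        rw [Real.norm_of_nonneg (sub_nonneg.2 hab)]
        generalize b - a = d
        congr 1
        ring

lemma ofReal_one_sub_le_measure_of_measure_compl_le {Ω : Type*} [MeasurableSpace Ω]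
    {P : Measure Ω} [IsProbabilityMeasure P] {s : Set Ω} {δ ε : ℝ}
    (hs : P sᶜ ≤ ENNReal.ofReal δ) (hδ : 0 ≤ δ) (hδε : δ ≤ ε) : ENNReal.ofReal (1 - ε) ≤ P s := by
  have hcover : 1 ≤ P s + ENNReal.ofReal δ := by
    simpa using (measure_univ_le_add_compl (μ := P) s).trans (by gcongr)
  calc ENNReal.ofReal (1 - ε) ≤ ENNReal.ofReal (1 - δ) := ENNReal.ofReal_le_ofReal (by linarith)
    _ ≤ 1 - ENNReal.ofReal δ := by
        rw [ENNReal.ofReal_sub 1 hδ, ENNReal.ofReal_one]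
    _ ≤ P s := tsub_le_iff_right.2 hcover

section Rounding

variable {n m T : ℕ} {v : Fin n → Fin m → ℝ} {i j : Fin n}

def envyIncrement (v : Fin n → Fin m → ℝ) (i j : Fin n) (p : Fin m × Fin n) : ℝ :=
  (if p.2 = j then v i p.1 else 0) - (if p.2 = i then v i p.1 else 0)

lemma envyIncrement_mem_Icc (hv : ∀ k, v i k ∈ Set.Icc (0 : ℝ) 1) (p : Fin m × Fin n) :
    envyIncrement v i j p ∈ Set.Icc (-1 : ℝ) 1 := by
  obtain ⟨hv0, hv1⟩ := hv p.1
  constructor <;> unfold envyIncrement <;> split_ifs <;> linarith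

lemma bundleVal_sub_eq_sum_envyIncrement {Ω : Type} (κ : Fin T → Ω → Fin m)
    (a : Fin T → Ω → Fin n) (ω : Ω) :
    bundleVal v κ a i j ω - bundleVal v κ a i i ω =
      ∑ t, envyIncrement v i j (κ t ω, a t ω) := by
  simp only [bundleVal, envyIncrement, ← Finset.sum_sub_distrib]

lemma sum_mul_envyIncrement (f : Fin m → ℝ) (X : Fin n → Fin m → ℝ) :
    ∑ p : Fin m × Fin n, f p.1 * X p.2 p.1 * envyIncrement v i j p =
      ∑ k, v i k * f k * X j k - ∑ k, v i k * f k * X i k := by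
  rw [Fintype.sum_prod_type, ← Finset.sum_sub_distrib]
  refine Finset.sum_congr rfl fun k _ ↦ ?_
  simp only [envyIncrement, mul_sub, mul_ite, mul_zero, Finset.sum_sub_distrib,
    Finset.sum_ite_eq', Finset.mem_univ, if_true]
  ring

variable {f : Fin m → ℝ} {X : Fin n → Fin m → ℝ} {Ω : Type} [MeasurableSpace Ω]
  {P : Measure Ω} {κ : Fin T → Ω → Fin m} {a : Fin T → Ω → Fin n}

lemma IIDRounding.integral_comp [IsFiniteMeasure P] (h : IIDRounding f X P κ a)
    (hf : ∀ k, 0 ≤ f k) (hX : ∀ i k, 0 ≤ X i k) (g : Fin m × Fin n → ℝ) (t : Fin T) :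
    ∫ ω, g (κ t ω, a t ω) ∂P = ∑ p, f p.1 * X p.2 p.1 * g p := by
  rw [← integral_map (h.1 t).aemeasurable (measurable_of_finite g).aestronglyMeasurable,
    integral_fintype Integrable.of_finite]
  refine Finset.sum_congr rfl fun p _ ↦ ?_
  have hfiber : (fun ω ↦ (κ t ω, a t ω)) ⁻¹' {p} = {ω | κ t ω = p.1 ∧ a t ω = p.2} := by
    ext ω; simp [Prod.ext_iff]
  rw [measureReal_def, Measure.map_apply (h.1 t) (measurableSet_singleton p), hfiber,
    h.2.2 t p.1 p.2, smul_eq_mul, ENNReal.toReal_ofReal (mul_nonneg (hf p.1) (hX p.2 p.1))]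

lemma IIDRounding.measureReal_envy_ge_le [IsProbabilityMeasure P] (h : IIDRounding f X P κ a)
    (hf : ∀ k, 0 ≤ f k) (hX : ∀ i k, 0 ≤ X i k) (hv : ∀ k, v i k ∈ Set.Icc (0 : ℝ) 1)
    (hEF : ∑ k, v i k * f k * X j k ≤ ∑ k, v i k * f k * X i k) {s : ℝ} (hs : 0 ≤ s) :
    P.real {ω | s ≤ bundleVal v κ a i j ω - bundleVal v κ a i i ω} ≤
      Real.exp (-s ^ 2 / (2 * T)) := by
  have hmeas (t : Fin T) : Measurable fun ω ↦ envyIncrement v i j (κ t ω, a t ω) :=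
    (measurable_of_finite (envyIncrement v i j)).comp (h.1 t)
  have hoeffding := measureReal_sum_ge_le_of_iIndepFun_of_mem_Icc
    (h.2.1.comp (fun _ ↦ envyIncrement v i j) fun _ ↦ measurable_of_finite _)
    (fun t ↦ (hmeas t).aemeasurable) (by norm_num : (-1 : ℝ) ≤ 1)
    (fun _ ↦ ae_of_all _ fun _ ↦ envyIncrement_mem_Icc hv _)
    (fun t ↦ by simpa [h.integral_comp hf hX, sum_mul_envyIncrement] using hEF)
    Finset.univ hs
  simp only [bundleVal_sub_eq_sum_envyIncrement]
  refine hoeffding.trans_eq ?_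
  rw [Finset.card_univ, Fintype.card_fin]
  congr 1
  ring

lemma IIDRounding.measure_envy_gt_le [IsProbabilityMeasure P] (h : IIDRounding f X P κ a)
    (hf : ∀ k, 0 ≤ f k) (hX : ∀ i k, 0 ≤ X i k) (hv : ∀ k, v i k ∈ Set.Icc (0 : ℝ) 1)
    (hEF : ∑ k, v i k * f k * X j k ≤ ∑ k, v i k * f k * X i k) (hT : 1 ≤ T) :
    P {ω | 2 * Real.sqrt (T * Real.log T) < bundleVal v κ a i j ω - bundleVal v κ a i i ω} ≤
      ENNReal.ofReal (1 / (T : ℝ) ^ 2) := by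
  have hT' : (1 : ℝ) ≤ T := by exact_mod_cast hT
  have hlog : 0 ≤ Real.log T := Real.log_nonneg hT'
  have hexponent : (2 * Real.sqrt (T * Real.log T)) ^ 2 / (2 * T) = Real.log ((T : ℝ) ^ 2) := by
    rw [mul_pow, Real.sq_sqrt (by positivity), Real.log_pow]
    field_simp
    ring
  rw [ENNReal.le_ofReal_iff_toReal_le (measure_ne_top P _) (by positivity)]
  calc (P {ω | _ < bundleVal v κ a i j ω - bundleVal v κ a i i ω}).toReal
      ≤ P.real {ω | 2 * Real.sqrt (T * Real.log T) ≤
          bundleVal v κ a i j ω - bundleVal v κ a i i ω} :=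
        measureReal_mono (Set.ofPred_subset_ofPred.2 fun _ ↦ le_of_lt)
    _ ≤ Real.exp (-(2 * Real.sqrt (T * Real.log T)) ^ 2 / (2 * T)) :=
        h.measureReal_envy_ge_le hf hX hv hEF (by positivity)
    _ = 1 / (T : ℝ) ^ 2 := by
        rw [neg_div, hexponent, Real.exp_neg, Real.exp_log (by positivity), one_div]

end Rounding

theorem POR_vanishing_envy_whp_general (n m : ℕ)
    (f : Fin m → ℝ) (hf0 : ∀ k, 0 < f k)
    (v : Fin n → Fin m → ℝ) (hv : ∀ i k, v i k ∈ Set.Icc (0 : ℝ) 1)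
    (X : Fin n → Fin m → ℝ) (hX : IsAlloc X)
    (hEF : ∀ i j : Fin n, ∑ k, v i k * f k * X j k ≤ ∑ k, v i k * f k * X i k) :
    (∀ T : ℕ, 2 ≤ T → ∀ (Ω : Type) [MeasurableSpace Ω] (P : Measure Ω)
        [IsProbabilityMeasure P] (κ : Fin T → Ω → Fin m) (a : Fin T → Ω → Fin n),
      IIDRounding f X P κ a →
      ∀ i j : Fin n,
        P {ω | 2 * Real.sqrt (T * Real.log T) <
            bundleVal v κ a i j ω - bundleVal v κ a i i ω} ≤
          ENNReal.ofReal (4 / (T : ℝ) ^ 2)) ∧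
    (∀ ε : ℝ, 0 < ε → ∃ T₀ : ℕ, ∀ T : ℕ, T₀ ≤ T →
      ∀ (Ω : Type) [MeasurableSpace Ω] (P : Measure Ω)
        [IsProbabilityMeasure P] (κ : Fin T → Ω → Fin m) (a : Fin T → Ω → Fin n),
      IIDRounding f X P κ a →
      ∀ i j : Fin n,
        ENNReal.ofReal (1 - ε) ≤
          P {ω | max (bundleVal v κ a i j ω - bundleVal v κ a i i ω) 0 ≤
              2 * Real.sqrt (T * Real.log T)}) := by
  have hf : ∀ k, 0 ≤ f k := fun k ↦ (hf0 k).le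
  have hX0 : ∀ i k, 0 ≤ X i k := fun i k ↦ (hX.1 i k).1
  refine ⟨fun T hT Ω _ P _ κ a h i j ↦ ?_, fun ε hε ↦ ?_⟩
  · refine (h.measure_envy_gt_le hf hX0 (hv i) (hEF i j) (by omega)).trans
      (ENNReal.ofReal_le_ofReal ?_)
    gcongr
    norm_num
  obtain ⟨T₀, hT₀⟩ := Filter.eventually_atTop.1
    (((tendsto_const_div_pow 1 2 two_ne_zero).eventually (eventually_le_nhds hε)).and
      (Filter.eventually_ge_atTop 1))
  refine ⟨T₀, fun T hT Ω _ P _ κ a h i j ↦ ?_⟩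
  obtain ⟨hsmall, hT1⟩ := hT₀ T hT
  refine ofReal_one_sub_le_measure_of_measure_compl_le ((measure_mono fun ω hω ↦ ?_).trans
    (h.measure_envy_gt_le hf hX0 (hv i) (hEF i j) hT1)) (by positivity) hsmall
  exact lt_of_not_ge fun hle ↦ hω (max_le hle (by positivity : (0 : ℝ) ≤ _))

/-- Suppose a fractional allocation `X` is envy-free w.r.t. the scaled valuations
`v'_{ik} = v_{ik}·f_k` and `T` i.i.d. items are allocated by giving an item of type
`k` to agent `i` with probability `X_{ik}`.  Then (1) for every pair of agents `i, j`,
the probability that `v_i(A_j) − v_i(A_i) > 2√(T·log T)` is at most `4/T²`; and (2) for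
every `ε > 0` there is a `T₀` such that for all `T ≥ T₀`, with probability at least
`1 − ε` the pairwise envy `max{v_i(A_j) − v_i(A_i), 0}` is at most `2√(T·log T)`. -/
theorem POR_vanishing_envy_whp (n m : ℕ) (hn : 1 ≤ n) (hm : 1 ≤ m)
    (f : Fin m → ℝ) (hf0 : ∀ k, 0 < f k) (hf1 : ∀ k, f k ≤ 1) (hfsum : ∑ k, f k = 1)
    (v : Fin n → Fin m → ℝ) (hv : ∀ i k, v i k ∈ Set.Icc (0 : ℝ) 1)
    (X : Fin n → Fin m → ℝ) (hX : IsAlloc X)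
    (hEF : ∀ i j : Fin n, ∑ k, v i k * f k * X j k ≤ ∑ k, v i k * f k * X i k) :
    (∀ T : ℕ, 2 ≤ T → ∀ (Ω : Type) [MeasurableSpace Ω] (P : Measure Ω)
        [IsProbabilityMeasure P] (κ : Fin T → Ω → Fin m) (a : Fin T → Ω → Fin n),
      IIDRounding f X P κ a →
      ∀ i j : Fin n,
        P {ω | 2 * Real.sqrt (T * Real.log T) <
            bundleVal v κ a i j ω - bundleVal v κ a i i ω} ≤
          ENNReal.ofReal (4 / (T : ℝ) ^ 2)) ∧
    (∀ ε : ℝ, 0 < ε → ∃ T₀ : ℕ, ∀ T : ℕ, T₀ ≤ T →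
      ∀ (Ω : Type) [MeasurableSpace Ω] (P : Measure Ω)
        [IsProbabilityMeasure P] (κ : Fin T → Ω → Fin m) (a : Fin T → Ω → Fin n),
      IIDRounding f X P κ a →
      ∀ i j : Fin n,
        ENNReal.ofReal (1 - ε) ≤
          P {ω | max (bundleVal v κ a i j ω - bundleVal v κ a i i ω) 0 ≤
              2 * Real.sqrt (T * Real.log T)}) :=
  POR_vanishing_envy_whp_general n m f hf0 v hv X hX hEF
end

section
/- Suppose the items 1, …, T are allocated sequentially so that each item t is given to an agent i ∈ C minimizing w({s < t : a(s) = i}), the common value of i's bundle so far. Then for all agents i, j ∈ C with A_j nonempty, w(A_j) − w(A_i) ≤ max_{t ∈ A_j} w_t. Consequently, for every agent i ∈ C, r_i·(w(A_j) − w(A_i)) ≤ max_{t ∈ A_j} r_i·w_t, i.e. the resulting allocation is envy-free up to one item (EF1) within C. -/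
open Finset

/-- Within a clique of `n` agents with proportional valuations (`agent i` values
item `t` at `r_i·w_t`), if the `T` items arrive in order and each item `t` is given
to an agent whose bundle so far has minimum total weight, then for all agents `i, j`
with `A_j` nonempty, `w(A_j) − w(A_i) ≤ max_{t ∈ A_j} w_t`; consequently
`r_i·(w(A_j) − w(A_i)) ≤ max_{t ∈ A_j} r_i·w_t`, i.e. the allocation is EF1. -/
theorem greedy_in_clique_EF1 (n T : ℕ)
    (r : Fin n → ℝ) (hr : ∀ i, 0 < r i)
    (w : Fin T → ℝ) (hw : ∀ t, 0 ≤ w t)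
    (a : Fin T → Fin n)
    (hgreedy : ∀ t : Fin T, ∀ j : Fin n,
      ∑ s ∈ univ.filter (fun s : Fin T => s < t ∧ a s = a t), w s ≤
        ∑ s ∈ univ.filter (fun s : Fin T => s < t ∧ a s = j), w s) :
    ∀ i j : Fin n, ∀ hne : (univ.filter (fun t : Fin T => a t = j)).Nonempty,
      ((∑ t ∈ univ.filter (fun t : Fin T => a t = j), w t) -
          ∑ t ∈ univ.filter (fun t : Fin T => a t = i), w t ≤
        (univ.filter (fun t : Fin T => a t = j)).sup' hne w) ∧
      r i * ((∑ t ∈ univ.filter (fun t : Fin T => a t = j), w t) -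
          ∑ t ∈ univ.filter (fun t : Fin T => a t = i), w t) ≤
        (univ.filter (fun t : Fin T => a t = j)).sup' hne (fun t => r i * w t) := by
  intro i j hne
  set Aj := univ.filter (fun t : Fin T => a t = j) with hAjdef
  set t0 := Aj.max' hne with ht0def
  have ht0 : t0 ∈ Aj := Finset.max'_mem _ _
  have hat0 : a t0 = j := (Finset.mem_filter.mp ht0).2
  have hsplit : Aj = insert t0 (univ.filter (fun s : Fin T => s < t0 ∧ a s = j)) := by
    ext s
    simp only [hAjdef, Finset.mem_filter, Finset.mem_insert, Finset.mem_univ, true_and]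
    constructor
    · intro hs
      rcases lt_or_eq_of_le (Finset.le_max' Aj s (Finset.mem_filter.mpr ⟨Finset.mem_univ s, hs⟩)) with h | h
      · exact Or.inr ⟨h, hs⟩
      · exact Or.inl h
    · rintro (rfl | ⟨_, hs⟩)
      · exact hat0
      · exact hs
  have hnotmem : t0 ∉ univ.filter (fun s : Fin T => s < t0 ∧ a s = j) := by
    simp [lt_irrefl]
  have hsum : ∑ t ∈ Aj, w t =
      w t0 + ∑ s ∈ univ.filter (fun s : Fin T => s < t0 ∧ a s = j), w s := by
    rw [hsplit, Finset.sum_insert hnotmem]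
  have hg := hgreedy t0 i
  rw [hat0] at hg
  have hsub : ∑ s ∈ univ.filter (fun s : Fin T => s < t0 ∧ a s = i), w s ≤
      ∑ t ∈ univ.filter (fun t : Fin T => a t = i), w t := by
    apply Finset.sum_le_sum_of_subset_of_nonneg
    · intro s hs
      simp only [Finset.mem_filter, Finset.mem_univ, true_and] at hs ⊢
      exact hs.2
    · intro s _ _; exact hw s
  have hkey : (∑ t ∈ Aj, w t) - ∑ t ∈ univ.filter (fun t : Fin T => a t = i), w t ≤ w t0 := by
    rw [hsum]; linarith
  have hw0 : w t0 ≤ Aj.sup' hne w := Finset.le_sup' w ht0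
  refine ⟨by linarith, ?_⟩
  calc r i * ((∑ t ∈ Aj, w t) - ∑ t ∈ univ.filter (fun t : Fin T => a t = i), w t)
      ≤ r i * w t0 := by
        exact mul_le_mul_of_nonneg_left hkey (hr i).le
    _ ≤ Aj.sup' hne (fun t => r i * w t) := Finset.le_sup' (fun t => r i * w t) ht0
end

section
/- Let f ≥ 0 and suppose the allocation a satisfies v_i(A^t_j) − v_i(A^t_i) ≤ f for all prefixes t ≤ T and all agents i, j. Then for every segment i ∈ {1,…,n} and every agent k, the number of items of segment i allocated to k lies in the interval [T/n² − x_i, T/n² + x_i], where x_i = (f/ε)·(1 + 2/ε)^{i−1}. -/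
open Finset

/-- In the lower-bound instance, agent `i`'s value for item `t` (numbered from `0`):
items of agent `i`'s own segment `[i·q, (i+1)·q)` are worth `1`, all others `ε`. -/
def segVal {n : ℕ} (q : ℕ) (ε : ℝ) (i : Fin n) (t : ℕ) : ℝ :=
  if i.val * q ≤ t ∧ t < (i.val + 1) * q then 1 else ε

section Aux

variable {n q : ℕ}

def cnt (a : Fin (n * q) → Fin n) (i : ℕ) (k : Fin n) : ℕ :=
  (univ.filter (fun t : Fin (n * q) => (i * q ≤ t.val ∧ t.val < (i + 1) * q) ∧ a t = k)).card

def pref (a : Fin (n * q) → Fin n) (m : ℕ) (j : Fin n) : ℕ :=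
  (univ.filter (fun t : Fin (n * q) => t.val < m * q ∧ a t = j)).card

def DD (a : Fin (n * q) → Fin n) (m : Fin n) (i : ℕ) (j : Fin n) : ℕ :=
  (univ.filter (fun t : Fin (n * q) =>
    (t.val < (i + 1) * q ∧ a t = j) ∧ (m.val * q ≤ t.val ∧ t.val < (m.val + 1) * q))).card

lemma sum_segVal (ε : ℝ) (m : Fin n) (F : Finset (Fin (n * q))) :
    ∑ s ∈ F, segVal q ε m s.val
      = (1 - ε) * ((F.filter (fun s => m.val * q ≤ s.val ∧ s.val < (m.val + 1) * q)).card : ℝ)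
        + ε * (F.card : ℝ) := by
  classical
  have h1 : ∀ s ∈ F.filter (fun s : Fin (n*q) => m.val * q ≤ s.val ∧ s.val < (m.val + 1) * q),
      segVal q ε m s.val = 1 := fun s hs => if_pos (Finset.mem_filter.mp hs).2
  have h2 : ∀ s ∈ F.filter (fun s : Fin (n*q) => ¬ (m.val * q ≤ s.val ∧ s.val < (m.val + 1) * q)),
      segVal q ε m s.val = ε := fun s hs => if_neg (Finset.mem_filter.mp hs).2
  have h3 := Finset.card_filter_add_card_filter_not (s := F)
      (p := fun s : Fin (n*q) => m.val * q ≤ s.val ∧ s.val < (m.val + 1) * q)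
  rw [← Finset.sum_filter_add_sum_filter_not F
      (fun s : Fin (n*q) => m.val * q ≤ s.val ∧ s.val < (m.val + 1) * q),
    Finset.sum_congr rfl h1, Finset.sum_congr rfl h2, Finset.sum_const, Finset.sum_const]
  have h4 : ((F.filter (fun s : Fin (n*q) => ¬ (m.val * q ≤ s.val ∧ s.val < (m.val + 1) * q))).card : ℝ)
      = (F.card : ℝ) - ((F.filter (fun s : Fin (n*q) => m.val * q ≤ s.val ∧ s.val < (m.val + 1) * q)).card : ℝ) := by
    rw [← h3]; push_cast; ring
  rw [nsmul_eq_mul, nsmul_eq_mul, h4]; ring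

lemma card_val_filter (N lo hi : ℕ) (h : hi ≤ N) :
    (univ.filter (fun t : Fin N => lo ≤ t.val ∧ t.val < hi)).card = hi - lo := by
  classical
  rw [Finset.card_filter]
  rw [Fin.sum_univ_eq_sum_range (fun m => if lo ≤ m ∧ m < hi then 1 else 0)]
  rw [← Finset.card_filter]
  have : (Finset.range N).filter (fun m => lo ≤ m ∧ m < hi) = Finset.Ico lo hi := by
    ext t; simp only [Finset.mem_filter, Finset.mem_range, Finset.mem_Ico]; omega
  rw [this, Nat.card_Ico]

lemma card_val_filter_lt (N hi : ℕ) (h : hi ≤ N) :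
    (univ.filter (fun t : Fin N => t.val < hi)).card = hi := by
  have he : (univ.filter (fun t : Fin N => t.val < hi))
      = (univ.filter (fun t : Fin N => 0 ≤ t.val ∧ t.val < hi)) := by
    apply Finset.filter_congr; intro t _; simp
  rw [he, card_val_filter N 0 hi h]; omega

lemma cnt_sum (a : Fin (n * q) → Fin n) (i : ℕ) (h : (i + 1) * q ≤ n * q) :
    ∑ k : Fin n, cnt a i k = q := by
  classical
  have h0 := Finset.card_eq_sum_card_fiberwise
    (s := univ.filter (fun t : Fin (n*q) => i * q ≤ t.val ∧ t.val < (i + 1) * q))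
    (t := univ) (f := a) (fun x _ => mem_univ _)
  rw [card_val_filter _ _ _ h] at h0
  have h1 : ∀ k : Fin n,
      ((univ.filter (fun t : Fin (n*q) => i * q ≤ t.val ∧ t.val < (i + 1) * q)).filter
        (fun t => a t = k)).card = cnt a i k := by
    intro k; rw [Finset.filter_filter]; rfl
  rw [Finset.sum_congr rfl (fun k _ => h1 k)] at h0
  have h2 : (i + 1) * q - i * q = q := by rw [Nat.succ_mul]; omega
  rw [h2] at h0
  exact h0.symm

lemma pref_sum (a : Fin (n * q) → Fin n) (m : ℕ) (h : m * q ≤ n * q) :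
    ∑ j : Fin n, pref a m j = m * q := by
  classical
  have h0 := Finset.card_eq_sum_card_fiberwise
    (s := univ.filter (fun t : Fin (n*q) => t.val < m * q))
    (t := univ) (f := a) (fun x _ => mem_univ _)
  rw [card_val_filter_lt _ _ h] at h0
  have h1 : ∀ k : Fin n,
      ((univ.filter (fun t : Fin (n*q) => t.val < m * q)).filter
        (fun t => a t = k)).card = pref a m k := by
    intro k; rw [Finset.filter_filter]; rfl
  rw [Finset.sum_congr rfl (fun k _ => h1 k)] at h0
  exact h0.symm

lemma pref_succ (a : Fin (n * q) → Fin n) (m : ℕ) (j : Fin n) :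
    pref a (m + 1) j = pref a m j + cnt a m j := by
  classical
  have hdis : Disjoint (univ.filter (fun t : Fin (n*q) => t.val < m * q ∧ a t = j))
      (univ.filter (fun t : Fin (n*q) => (m * q ≤ t.val ∧ t.val < (m+1)*q) ∧ a t = j)) := by
    rw [Finset.disjoint_left]
    intro t ht1 ht2
    simp only [mem_filter, mem_univ, true_and] at ht1 ht2
    exact absurd ht2.1.1 (Nat.not_le.mpr ht1.1)
  have hun : (univ.filter (fun t : Fin (n*q) => t.val < (m+1) * q ∧ a t = j))
      = (univ.filter (fun t : Fin (n*q) => t.val < m * q ∧ a t = j))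
        ∪ (univ.filter (fun t : Fin (n*q) => (m * q ≤ t.val ∧ t.val < (m+1)*q) ∧ a t = j)) := by
    ext t
    simp only [mem_filter, mem_union, mem_univ, true_and]
    have hmq : m * q ≤ (m+1) * q := Nat.mul_le_mul_right _ (by omega)
    constructor
    · rintro ⟨h1, h2⟩
      rcases lt_or_ge t.val (m*q) with h3 | h3
      · exact Or.inl ⟨h3, h2⟩
      · exact Or.inr ⟨⟨h3, h1⟩, h2⟩
    · rintro (⟨h1, h2⟩ | ⟨⟨h1a, h1b⟩, h2⟩)
      · exact ⟨lt_of_lt_of_le h1 hmq, h2⟩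
      · exact ⟨h1b, h2⟩
  rw [pref, pref, cnt, hun, Finset.card_union_of_disjoint hdis]

lemma pref_eq_sum (a : Fin (n * q) → Fin n) (m : ℕ) (j : Fin n) :
    pref a m j = ∑ i' ∈ Finset.range m, cnt a i' j := by
  induction m with
  | zero => simp [pref]
  | succ m ih => rw [pref_succ, ih, Finset.sum_range_succ]

lemma DD_eq_zero (a : Fin (n * q) → Fin n) (m : Fin n) (i : ℕ) (j : Fin n) (h : i < m.val) :
    DD a m i j = 0 := by
  rw [DD, Finset.card_eq_zero, Finset.filter_eq_empty_iff]
  intro t _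
  rintro ⟨⟨h1, _⟩, ⟨h2, _⟩⟩
  have : (i + 1) * q ≤ m.val * q := Nat.mul_le_mul_right _ (by omega)
  omega

lemma DD_eq_cnt (a : Fin (n * q) → Fin n) (m : Fin n) (i : ℕ) (j : Fin n) (h : m.val ≤ i) :
    DD a m i j = cnt a m.val j := by
  rw [DD, cnt]
  congr 1
  ext t
  simp only [mem_filter, mem_univ, true_and]
  have hle : (m.val + 1) * q ≤ (i + 1) * q := Nat.mul_le_mul_right _ (by omega)
  constructor
  · rintro ⟨⟨_, h2⟩, h3⟩; exact ⟨h3, h2⟩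
  · rintro ⟨⟨h3a, h3b⟩, h2⟩; exact ⟨⟨by omega, h2⟩, ⟨h3a, h3b⟩⟩

end Aux

set_option maxHeartbeats 1000000 in
/-- Lower-bound instance with `n ≥ 2` agents, `T = n·q` items split into `n` consecutive
segments of length `q = T/n`. If the allocation `a` has all prefix pairwise envies at
most `f`, then for every segment `i` and agent `k`, the number of items of segment `i`
allocated to agent `k` lies in `[T/n² − x_i, T/n² + x_i]` with
`x_i = (f/ε)·(1 + 2/ε)^{i−1}`. -/
theorem bounded_envy_forces_balanced_segments
    (n q : ℕ) (hn : 2 ≤ n) (hq : 0 < q)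
    (ε : ℝ) (hε0 : 0 < ε) (hε1 : ε ≤ 1)
    (f : ℝ) (hf : 0 ≤ f)
    (a : Fin (n * q) → Fin n)
    (henvy : ∀ t : ℕ, t ≤ n * q → ∀ i j : Fin n,
      (∑ s ∈ univ.filter (fun s : Fin (n * q) => s.val < t ∧ a s = j),
          segVal q ε i s.val) -
        (∑ s ∈ univ.filter (fun s : Fin (n * q) => s.val < t ∧ a s = i),
          segVal q ε i s.val) ≤ f) :
    ∀ i k : Fin n,
      ((n * q : ℝ) / (n : ℝ) ^ 2 - (f / ε) * (1 + 2 / ε) ^ (i.val) ≤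
        ((univ.filter (fun t : Fin (n * q) =>
            (i.val * q ≤ t.val ∧ t.val < (i.val + 1) * q) ∧ a t = k)).card : ℝ)) ∧
      (((univ.filter (fun t : Fin (n * q) =>
            (i.val * q ≤ t.val ∧ t.val < (i.val + 1) * q) ∧ a t = k)).card : ℝ) ≤
        (n * q : ℝ) / (n : ℝ) ^ 2 + (f / ε) * (1 + 2 / ε) ^ (i.val)) := by
  have hne : (ε : ℝ) ≠ 0 := ne_of_gt hε0
  have hn0 : (0:ℝ) < n := by
    have : (0:ℕ) < n := by omega
    exact_mod_cast this
  -- envy in count form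
  have key : ∀ i : ℕ, i < n → ∀ m j : Fin n,
      ε * ((pref a (i+1) j : ℝ) - (pref a (i+1) m : ℝ))
        + (1 - ε) * ((DD a m i j : ℝ) - (DD a m i m : ℝ)) ≤ f := by
    intro i hin m j
    have ht : (i+1) * q ≤ n * q := Nat.mul_le_mul_right _ (by omega)
    have h := henvy ((i+1)*q) ht m j
    rw [sum_segVal, sum_segVal, Finset.filter_filter, Finset.filter_filter] at h
    have e1 : ∀ j' : Fin n, ((univ.filter (fun s : Fin (n*q) =>
        (s.val < (i+1)*q ∧ a s = j') ∧ m.val * q ≤ s.val ∧ s.val < (m.val+1)*q)).card : ℝ)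
        = (DD a m i j' : ℝ) := fun j' => by norm_num [DD]
    have e2 : ∀ j' : Fin n, ((univ.filter (fun s : Fin (n*q) =>
        s.val < (i+1)*q ∧ a s = j')).card : ℝ)
        = (pref a (i+1) j' : ℝ) := fun j' => by norm_num [pref]
    rw [e1 j, e1 m, e2 j, e2 m] at h
    linarith
  -- the recurrence for the bound
  have hgeom : ∀ i : ℕ, (f/ε) * (1 + 2/ε) ^ i
      = f/ε + (2/ε) * ∑ i' ∈ Finset.range i, (f/ε) * (1 + 2/ε) ^ i' := by
    intro i
    induction i with
    | zero => simp
    | succ i ih =>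
      rw [Finset.sum_range_succ, pow_succ]
      linear_combination ih
  -- main claim by strong induction
  have main : ∀ i : ℕ, i < n → ∀ k : Fin n,
      |(cnt a i k : ℝ) - q / n| ≤ (f/ε) * (1 + 2/ε) ^ i := by
    intro i
    induction i using Nat.strong_induction_on with
    | _ i IH =>
      intro hin k
      have hXnn : (0:ℝ) ≤ ∑ i' ∈ Finset.range i, (f/ε) * (1 + 2/ε) ^ i' :=
        Finset.sum_nonneg fun i' _ => by positivity
      have hpre : ∀ j : Fin n, |(pref a i j : ℝ) - i * q / n|
          ≤ ∑ i' ∈ Finset.range i, (f/ε) * (1 + 2/ε) ^ i' := by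
        intro j
        have he : (pref a i j : ℝ) - i * q / n
            = ∑ i' ∈ Finset.range i, ((cnt a i' j : ℝ) - q / n) := by
          rw [pref_eq_sum]
          push_cast
          rw [Finset.sum_sub_distrib, Finset.sum_const, Finset.card_range, nsmul_eq_mul]
          ring
        rw [he]
        refine le_trans (Finset.abs_sum_le_sum_abs _ _) (Finset.sum_le_sum fun i' hi' => ?_)
        exact IH i' (Finset.mem_range.mp hi') (lt_trans (Finset.mem_range.mp hi') hin) j
      -- pairwise bound, scaled by ε
      have hpair : ∀ j k' : Fin n, ε * ((cnt a i j : ℝ) - cnt a i k')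
          ≤ f + 2 * ∑ i' ∈ Finset.range i, (f/ε) * (1 + 2/ε) ^ i' := by
        intro j k'
        have hk := key i hin k' j
        have hsucc : ∀ m : Fin n, (pref a (i+1) m : ℝ) = pref a i m + cnt a i m := by
          intro m; rw [pref_succ]; push_cast; ring
        rw [hsucc j, hsucc k'] at hk
        have hpj := abs_le.mp (hpre j)
        have hpk := abs_le.mp (hpre k')
        have hA : (pref a i k' : ℝ) - pref a i j
            ≤ 2 * ∑ i' ∈ Finset.range i, (f/ε) * (1 + 2/ε) ^ i' := by linarith
        have e1 : ε * ((pref a i k' : ℝ) - pref a i j)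
            ≤ ε * (2 * ∑ i' ∈ Finset.range i, (f/ε) * (1 + 2/ε) ^ i') :=
          mul_le_mul_of_nonneg_left hA hε0.le
        have e1' : ε * (2 * ∑ i' ∈ Finset.range i, (f/ε) * (1 + 2/ε) ^ i')
            ≤ 2 * ∑ i' ∈ Finset.range i, (f/ε) * (1 + 2/ε) ^ i' := by nlinarith
        rcases lt_trichotomy k'.val i with hkc | hkc | hkc
        · -- k' owns an earlier segment
          rw [DD_eq_cnt a k' i j (le_of_lt hkc), DD_eq_cnt a k' i k' (le_of_lt hkc)] at hk
          have h1 := abs_le.mp (IH k'.val hkc (lt_trans hkc hin) j)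
          have h2 := abs_le.mp (IH k'.val hkc (lt_trans hkc hin) k')
          have hxX : (f/ε) * (1 + 2/ε) ^ k'.val
              ≤ ∑ i' ∈ Finset.range i, (f/ε) * (1 + 2/ε) ^ i' :=
            Finset.single_le_sum (f := fun i' => f / ε * (1 + 2 / ε) ^ i') (fun i' _ => by positivity) (Finset.mem_range.mpr hkc)
          have hB : (cnt a k'.val k' : ℝ) - cnt a k'.val j
              ≤ 2 * ∑ i' ∈ Finset.range i, (f/ε) * (1 + 2/ε) ^ i' := by linarith
          have e2 : (1-ε) * ((cnt a k'.val k' : ℝ) - cnt a k'.val j)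
              ≤ (1-ε) * (2 * ∑ i' ∈ Finset.range i, (f/ε) * (1 + 2/ε) ^ i') :=
            mul_le_mul_of_nonneg_left hB (by linarith)
          nlinarith [hk, e1, e2]
        · -- k' owns the current segment
          rw [DD_eq_cnt a k' i j (le_of_eq hkc), DD_eq_cnt a k' i k' (le_of_eq hkc), hkc] at hk
          have hd : (cnt a i j : ℝ) - cnt a i k'
              ≤ f + ε * (2 * ∑ i' ∈ Finset.range i, (f/ε) * (1 + 2/ε) ^ i') := by
            nlinarith [hk, e1]
          have hd' := mul_le_mul_of_nonneg_left hd hε0.le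
          nlinarith [hd', hf, hXnn, hε1, hε0.le, mul_nonneg hXnn (sub_nonneg.mpr hε1),
            mul_nonneg (mul_nonneg hXnn hε0.le) (sub_nonneg.mpr hε1)]
        · -- k' owns a later segment
          rw [DD_eq_zero a k' i j hkc, DD_eq_zero a k' i k' hkc] at hk
          nlinarith [hk, e1, e1']
      -- deduce the absolute bound from the pairwise bounds plus the total count
      have hxi : ε * ((f/ε) * (1 + 2/ε) ^ i)
          = f + 2 * ∑ i' ∈ Finset.range i, (f/ε) * (1 + 2/ε) ^ i' := by
        rw [hgeom i]
        field_simp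
      have hpair' : ∀ j k' : Fin n, (cnt a i j : ℝ) - cnt a i k' ≤ (f/ε) * (1 + 2/ε) ^ i := by
        intro j k'
        have h := hpair j k'
        rw [← hxi] at h
        exact le_of_mul_le_mul_left h hε0
      have hq' : ∑ j : Fin n, (cnt a i j : ℝ) = q := by
        have h0 := cnt_sum a i (Nat.mul_le_mul_right q (by omega : i + 1 ≤ n))
        calc ∑ j : Fin n, (cnt a i j : ℝ) = ((∑ j : Fin n, cnt a i j : ℕ) : ℝ) := by push_cast; rfl
        _ = q := by rw [h0]
      have hcardsum : ∀ c : ℝ, ∑ _j : Fin n, c = n * c := by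
        intro c; rw [Finset.sum_const, Finset.card_univ, Fintype.card_fin, nsmul_eq_mul]
      rw [abs_le]
      constructor
      · -- lower bound
        have h1 : (q:ℝ) - n * cnt a i k ≤ n * ((f/ε) * (1 + 2/ε) ^ i) := by
          have he : (q:ℝ) - n * cnt a i k = ∑ j : Fin n, ((cnt a i j : ℝ) - cnt a i k) := by
            rw [Finset.sum_sub_distrib, hq', hcardsum]
          rw [he, ← hcardsum]
          exact Finset.sum_le_sum fun j _ => hpair' j k
        have h2 : (q:ℝ)/n ≤ cnt a i k + (f/ε) * (1 + 2/ε) ^ i := by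
          rw [div_le_iff₀ hn0]
          nlinarith [h1]
        linarith
      · -- upper bound
        have h1 : (n:ℝ) * cnt a i k - q ≤ n * ((f/ε) * (1 + 2/ε) ^ i) := by
          have he : (n:ℝ) * cnt a i k - q = ∑ j : Fin n, ((cnt a i k : ℝ) - cnt a i j) := by
            rw [Finset.sum_sub_distrib, hq', hcardsum]
          rw [he, ← hcardsum]
          exact Finset.sum_le_sum fun j _ => hpair' k j
        have h2 : (cnt a i k : ℝ) - (f/ε) * (1 + 2/ε) ^ i ≤ (q:ℝ)/n := by
          rw [le_div_iff₀ hn0]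
          nlinarith [h1]
        linarith
  -- conclude
  intro i k
  have hmain := abs_le.mp (main i.val i.isLt k)
  have hTq : ((n:ℝ) * q) / (n : ℝ) ^ 2 = (q:ℝ) / n := by
    field_simp
  simp only [cnt] at hmain
  constructor
  · rw [hTq]; linarith [hmain.1]
  · rw [hTq]; linarith [hmain.2]
end

section
/- Let f ≥ 0 satisfy f/T < (ε/(1 + (n−1)·ε)) · (ε/(n²·(1 + 2/ε)^{n−1})), and suppose the allocation a satisfies v_i(A^t_j) − v_i(A^t_i) ≤ f for all prefixes t ≤ T and all agents i, j. Then every agent's final utility satisfies v_i(A^T_i) < (1/n + ε)·(T/n). Since the allocation that gives all items of segment i to agent i yields utility exactly T/n for every agent, the final allocation A^T is not (1/n + ε)-Pareto efficient. -/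
open Finset

/-- Agent `i`'s total utility under the (complete) allocation `a`. -/
def segUtil {n : ℕ} (q : ℕ) (ε : ℝ) (a : Fin (n * q) → Fin n) (i : Fin n) : ℝ :=
  ∑ t : Fin (n * q), if a t = i then segVal q ε i t.val else 0

/-- Prefix bundle value: agent `i`'s value for the items among the first `k` segments
allocated to `j`. -/
def Spre (n q : ℕ) (ε : ℝ) (a : Fin (n * q) → Fin n) (k : ℕ) (i j : Fin n) : ℝ :=
  ∑ s ∈ univ.filter (fun s : Fin (n * q) => s.val < k * q ∧ a s = j), segVal q ε i s.val

/-- Number of items of segment `k` (0-indexed) allocated to `j`, as a real. -/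
def Cnt (n q : ℕ) (a : Fin (n * q) → Fin n) (k : ℕ) (j : Fin n) : ℝ :=
  ((univ.filter (fun s : Fin (n * q) =>
      k * q ≤ s.val ∧ s.val < (k + 1) * q ∧ a s = j)).card : ℝ)

lemma segVal_of_mem {n q : ℕ} {ε : ℝ} (i : Fin n) (k : ℕ)
    {s : ℕ} (h1 : k * q ≤ s) (h2 : s < (k + 1) * q) :
    segVal q ε i s = if i.val = k then 1 else ε := by
  unfold segVal
  rcases eq_or_ne i.val k with h | h
  · rw [if_pos h, if_pos]
    rw [h]
    exact ⟨h1, h2⟩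
  · rw [if_neg h, if_neg]
    rintro ⟨ha, hb⟩
    have hik : i.val < k + 1 := by
      by_contra hc
      push_neg at hc
      exact absurd (le_trans (Nat.mul_le_mul_right q hc) ha) (by omega)
    have hki : k < i.val + 1 := by
      by_contra hc
      push_neg at hc
      exact absurd (le_trans (Nat.mul_le_mul_right q hc) h1) (by omega)
    omega

lemma Spre_succ (n q : ℕ) (ε : ℝ) (a : Fin (n * q) → Fin n) (k : ℕ) (i j : Fin n) :
    Spre n q ε a (k + 1) i j
      = Spre n q ε a k i j + (if i.val = k then 1 else ε) * Cnt n q a k j := by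
  unfold Spre Cnt
  have hle : k * q ≤ (k + 1) * q := Nat.mul_le_mul_right q (Nat.le_succ k)
  have hunion : univ.filter (fun s : Fin (n * q) => s.val < (k + 1) * q ∧ a s = j)
      = univ.filter (fun s : Fin (n * q) => s.val < k * q ∧ a s = j)
        ∪ univ.filter (fun s : Fin (n * q) =>
            k * q ≤ s.val ∧ s.val < (k + 1) * q ∧ a s = j) := by
    ext s
    simp only [mem_union, mem_filter, mem_univ, true_and]
    constructor
    · rintro ⟨h1, h2⟩
      rcases lt_or_ge s.val (k * q) with h | h
      · exact Or.inl ⟨h, h2⟩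
      · exact Or.inr ⟨h, h1, h2⟩
    · rintro (⟨h1, h2⟩ | ⟨h1, h2, h3⟩)
      · exact ⟨lt_of_lt_of_le h1 hle, h2⟩
      · exact ⟨h2, h3⟩
  have hdisj : Disjoint
      (univ.filter (fun s : Fin (n * q) => s.val < k * q ∧ a s = j))
      (univ.filter (fun s : Fin (n * q) =>
          k * q ≤ s.val ∧ s.val < (k + 1) * q ∧ a s = j)) := by
    rw [Finset.disjoint_left]
    intro s hs hs'
    simp only [mem_filter, mem_univ, true_and] at hs hs'
    omega
  rw [hunion, Finset.sum_union hdisj]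
  congr 1
  rw [Finset.sum_congr rfl (fun s hs => by
    simp only [mem_filter, mem_univ, true_and] at hs
    exact segVal_of_mem i k hs.1 hs.2.1)]
  rw [Finset.sum_const, nsmul_eq_mul, mul_comm]

set_option maxHeartbeats 1000000 in
/-- Lower-bound instance with `n ≥ 2` agents and `T = n·q` items split into `n`
consecutive segments of length `q = T/n`. If `f/T` is small enough and the allocation
`a` has all prefix pairwise envies at most `f`, then every agent's final utility is
less than `(1/n + ε)·(T/n)`; consequently the final allocation is not
`(1/n + ε)`-Pareto efficient: there is an allocation making every agent strictly more
than `1/(1/n + ε)` times better off. -/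
theorem bounded_envy_not_pareto_efficient
    (n q : ℕ) (hn : 2 ≤ n) (hq : 0 < q)
    (ε : ℝ) (hε0 : 0 < ε) (hε1 : ε ≤ 1)
    (f : ℝ) (hf : 0 ≤ f)
    (hfT : f / (n * q : ℝ) <
      (ε / (1 + ((n : ℝ) - 1) * ε)) * (ε / ((n : ℝ) ^ 2 * (1 + 2 / ε) ^ (n - 1))))
    (a : Fin (n * q) → Fin n)
    (henvy : ∀ t : ℕ, t ≤ n * q → ∀ i j : Fin n,
      (∑ s ∈ univ.filter (fun s : Fin (n * q) => s.val < t ∧ a s = j),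
          segVal q ε i s.val) -
        (∑ s ∈ univ.filter (fun s : Fin (n * q) => s.val < t ∧ a s = i),
          segVal q ε i s.val) ≤ f) :
    (∀ i : Fin n, segUtil q ε a i < (1 / (n : ℝ) + ε) * ((n * q : ℝ) / (n : ℝ))) ∧
    ∃ a' : Fin (n * q) → Fin n,
      ∀ i : Fin n, segUtil q ε a i / (1 / (n : ℝ) + ε) < segUtil q ε a' i := by
  have hN2 : (2 : ℝ) ≤ (n : ℝ) := by exact_mod_cast hn
  have hN0 : (0 : ℝ) < (n : ℝ) := by linarith
  have hQ0 : (0 : ℝ) < (q : ℝ) := by exact_mod_cast hq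
  have hinv : (0 : ℝ) < 1 / ε := by positivity
  have hone : (1 : ℝ) ≤ 1 + 1 / ε := by linarith
  -- Step 1: disparity of bundles stays small, by induction on segments
  have hsp : ∀ k, k ≤ n → ∀ i j j' : Fin n,
      Spre n q ε a k i j - Spre n q ε a k i j' ≤ f * ((1 + 1 / ε) ^ k - 1) := by
    intro k
    induction k with
    | zero =>
      intro _ i j j'
      have h0 : ∀ j : Fin n, Spre n q ε a 0 i j = 0 := by
        intro j
        unfold Spre
        rw [Finset.filter_false_of_mem, Finset.sum_empty]
        intro s _
        simp
      simp [h0]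
    | succ k ih =>
      intro hk i j j'
      have hk' : k ≤ n := by omega
      have ihh := ih hk'
      have hpowk : (1 : ℝ) ≤ (1 + 1 / ε) ^ k := one_le_pow₀ hone
      have hM0 : 0 ≤ f * ((1 + 1 / ε) ^ k - 1) := mul_nonneg hf (by linarith)
      -- counts of segment k items are nearly equal
      have hC : ∀ j j' : Fin n, ε * (Cnt n q a k j - Cnt n q a k j')
          ≤ f + f * ((1 + 1 / ε) ^ k - 1) := by
        intro j j'
        rcases le_or_gt (Cnt n q a k j) (Cnt n q a k j') with h | h
        · nlinarith
        · have henv := henvy ((k + 1) * q)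
            (Nat.mul_le_mul_right q (by omega : k + 1 ≤ n)) j' j
          have e1 : Spre n q ε a (k + 1) j' j - Spre n q ε a (k + 1) j' j' ≤ f := henv
          rw [Spre_succ, Spre_succ] at e1
          set w : ℝ := if (j' : Fin n).val = k then (1 : ℝ) else ε with hw
          have hwε : ε ≤ w := by
            rw [hw]; split <;> linarith
          have hprev := ihh j' j' j
          -- w * (Cj - Cj') ≤ f + M
          have h2 : w * (Cnt n q a k j - Cnt n q a k j')
              ≤ f + f * ((1 + 1 / ε) ^ k - 1) := by nlinarith
          nlinarith [mul_le_mul_of_nonneg_right hwε (le_of_lt (sub_pos.mpr h))]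
      rw [Spre_succ, Spre_succ]
      set w : ℝ := if i.val = k then (1 : ℝ) else ε with hw
      have hw0 : 0 < w := by
        rw [hw]; split
        · norm_num
        · exact hε0
      have hw1 : w ≤ 1 := by
        rw [hw]; split
        · exact le_rfl
        · exact hε1
      have h1 := ihh i j j'
      have h2 := hC j j'
      have h3 : w * (Cnt n q a k j - Cnt n q a k j')
          ≤ (f + f * ((1 + 1 / ε) ^ k - 1)) / ε := by
        rcases le_or_gt (Cnt n q a k j) (Cnt n q a k j') with h | h
        · have : w * (Cnt n q a k j - Cnt n q a k j') ≤ 0 := by nlinarith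
          have : 0 ≤ (f + f * ((1 + 1 / ε) ^ k - 1)) / ε := by positivity
          linarith
        · have hd : Cnt n q a k j - Cnt n q a k j'
              ≤ (f + f * ((1 + 1 / ε) ^ k - 1)) / ε := by
            rw [le_div_iff₀ hε0]
            nlinarith
          nlinarith
      have hident : f * ((1 + 1 / ε) ^ (k + 1) - 1)
          = f * ((1 + 1 / ε) ^ k - 1)
            + (f + f * ((1 + 1 / ε) ^ k - 1)) / ε := by
        rw [pow_succ]
        field_simp
        ring
      linarith [h1, h3, hident.le, hident.ge]
  -- Step 2: sums of bundles and total values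
  have hfilterT : ∀ j : Fin n,
      univ.filter (fun s : Fin (n * q) => s.val < n * q ∧ a s = j)
        = univ.filter (fun s : Fin (n * q) => a s = j) := by
    intro j
    ext s
    simp [s.isLt]
  have hIco : ∀ i : Fin n,
      (Finset.range (n * q)).filter
          (fun t => i.val * q ≤ t ∧ t < (i.val + 1) * q)
        = Finset.Ico (i.val * q) ((i.val + 1) * q) := by
    intro i
    have hle : (i.val + 1) * q ≤ n * q :=
      Nat.mul_le_mul_right q (Nat.succ_le_of_lt i.isLt)
    ext t
    simp only [Finset.mem_filter, Finset.mem_range, Finset.mem_Ico]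
    constructor
    · rintro ⟨_, h⟩; exact h
    · intro h; exact ⟨lt_of_lt_of_le h.2 hle, h⟩
  have hIcoCard : ∀ i : Fin n,
      (Finset.Ico (i.val * q) ((i.val + 1) * q)).card = q := by
    intro i
    rw [Nat.card_Ico, Nat.add_mul, one_mul, Nat.add_sub_cancel_left]
  have hrange : ∀ i : Fin n, ∑ t ∈ Finset.range (n * q), segVal q ε i t
      = (n : ℝ) * q * ε + (1 - ε) * q := by
    intro i
    have hseg : ∀ t ∈ Finset.range (n * q), segVal q ε i t
        = ε + (if i.val * q ≤ t ∧ t < (i.val + 1) * q then 1 - ε else 0) := by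
      intro t _
      unfold segVal
      split <;> ring
    rw [Finset.sum_congr rfl hseg, Finset.sum_add_distrib, Finset.sum_const,
      Finset.card_range, nsmul_eq_mul, ← Finset.sum_filter, hIco i,
      Finset.sum_const, hIcoCard i, nsmul_eq_mul]
    push_cast
    ring
  have htotal : ∀ i : Fin n, ∑ j : Fin n, Spre n q ε a n i j
      = (n : ℝ) * q * ε + (1 - ε) * q := by
    intro i
    unfold Spre
    simp only [hfilterT]
    rw [Finset.sum_fiberwise univ a (fun s : Fin (n * q) => segVal q ε i s.val)]
    rw [Fin.sum_univ_eq_sum_range (fun t => segVal q ε i t)]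
    exact hrange i
  have hutil : ∀ i : Fin n, segUtil q ε a i = Spre n q ε a n i i := by
    intro i
    unfold segUtil Spre
    simp only [hfilterT]
    rw [Finset.sum_filter]
  -- Step 3: the f-bound implies the disparity is below εq/n
  have hMn : f * ((1 + 1 / ε) ^ n - 1) < ε * q / n := by
    have hD : (0 : ℝ) < 1 + ((n : ℝ) - 1) * ε := by nlinarith
    have hB0 : (0 : ℝ) < (1 + 2 / ε) ^ (n - 1) := by positivity
    have hA0 : (0 : ℝ) < (1 + 1 / ε) ^ (n - 1) := by positivity
    have hAB : (1 + 1 / ε) ^ (n - 1) ≤ (1 + 2 / ε) ^ (n - 1) := by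
      apply pow_le_pow_left₀ (by positivity)
      have : 1 / ε ≤ 2 / ε := by
        have h12 : 2 / ε - 1 / ε = 1 / ε := by ring
        linarith
      linarith
    have hf' : f < ((n : ℝ) * q) * ((ε / (1 + ((n : ℝ) - 1) * ε))
        * (ε / ((n : ℝ) ^ 2 * (1 + 2 / ε) ^ (n - 1)))) := by
      rw [div_lt_iff₀ (by positivity : (0 : ℝ) < (n : ℝ) * q)] at hfT
      linarith [hfT]
    have hnsplit : n - 1 + 1 = n := by omega
    have hpowsplit : (1 + 1 / ε) ^ n = (1 + 1 / ε) ^ (n - 1) * (1 + 1 / ε) := by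
      conv_lhs => rw [← hnsplit]
      rw [pow_succ]
    have hkey : ((n : ℝ) * q) * ((ε / (1 + ((n : ℝ) - 1) * ε))
        * (ε / ((n : ℝ) ^ 2 * (1 + 2 / ε) ^ (n - 1)))) * (1 + 1 / ε) ^ n
        ≤ ε * q / n := by
      rw [hpowsplit]
      have hL : ((n : ℝ) * q) * ((ε / (1 + ((n : ℝ) - 1) * ε))
          * (ε / ((n : ℝ) ^ 2 * (1 + 2 / ε) ^ (n - 1))))
          * ((1 + 1 / ε) ^ (n - 1) * (1 + 1 / ε))
          = ((q : ℝ) * ε * (ε + 1) * (1 + 1 / ε) ^ (n - 1))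
            / ((1 + ((n : ℝ) - 1) * ε) * (n : ℝ) * (1 + 2 / ε) ^ (n - 1)) := by
        field_simp
      rw [hL, div_le_div_iff₀ (by positivity) hN0]
      have hstep : (ε + 1) * (1 + 1 / ε) ^ (n - 1)
          ≤ (1 + ((n : ℝ) - 1) * ε) * (1 + 2 / ε) ^ (n - 1) := by
        have h1 : (ε + 1) * (1 + 1 / ε) ^ (n - 1)
            ≤ (ε + 1) * (1 + 2 / ε) ^ (n - 1) := by nlinarith
        have hεD : ε + 1 ≤ 1 + ((n : ℝ) - 1) * ε := by nlinarith
        have h2 : (ε + 1) * (1 + 2 / ε) ^ (n - 1)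
            ≤ (1 + ((n : ℝ) - 1) * ε) * (1 + 2 / ε) ^ (n - 1) :=
          mul_le_mul_of_nonneg_right hεD (le_of_lt hB0)
        linarith
      nlinarith [mul_le_mul_of_nonneg_left hstep
        (show (0 : ℝ) ≤ (q : ℝ) * ε * (n : ℝ) by positivity)]
    have hApos : (0 : ℝ) < (1 + 1 / ε) ^ n := by positivity
    calc f * ((1 + 1 / ε) ^ n - 1) ≤ f * (1 + 1 / ε) ^ n := by nlinarith
      _ < ((n : ℝ) * q) * ((ε / (1 + ((n : ℝ) - 1) * ε))
            * (ε / ((n : ℝ) ^ 2 * (1 + 2 / ε) ^ (n - 1)))) * (1 + 1 / ε) ^ n :=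
        mul_lt_mul_of_pos_right hf' hApos
      _ ≤ ε * q / n := hkey
  -- Step 4: each agent's utility is below (1/n + ε) * q
  have main : ∀ i : Fin n, segUtil q ε a i < (1 / (n : ℝ) + ε) * (q : ℝ) := by
    intro i
    have hub : (n : ℝ) * segUtil q ε a i
        ≤ ((n : ℝ) * q * ε + (1 - ε) * q) + (n : ℝ) * (f * ((1 + 1 / ε) ^ n - 1)) := by
      have h1 : ∀ j : Fin n, Spre n q ε a n i i
          ≤ Spre n q ε a n i j + f * ((1 + 1 / ε) ^ n - 1) := by
        intro j
        have := hsp n le_rfl i i j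
        linarith
      calc (n : ℝ) * segUtil q ε a i
          = ∑ _j : Fin n, Spre n q ε a n i i := by
            rw [hutil i, Finset.sum_const, Finset.card_univ, Fintype.card_fin,
              nsmul_eq_mul]
        _ ≤ ∑ j : Fin n, (Spre n q ε a n i j + f * ((1 + 1 / ε) ^ n - 1)) :=
            Finset.sum_le_sum fun j _ => h1 j
        _ = ((n : ℝ) * q * ε + (1 - ε) * q) + (n : ℝ) * (f * ((1 + 1 / ε) ^ n - 1)) := by
            rw [Finset.sum_add_distrib, htotal i, Finset.sum_const,
              Finset.card_univ, Fintype.card_fin, nsmul_eq_mul]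
    have hNM : (n : ℝ) * (f * ((1 + 1 / ε) ^ n - 1)) < (n : ℝ) * (ε * q / n) :=
      mul_lt_mul_of_pos_left hMn hN0
    have hNq : (n : ℝ) * (ε * q / n) = ε * q := by field_simp
    have hgoal : (n : ℝ) * ((1 / (n : ℝ) + ε) * q) = (q : ℝ) + (n : ℝ) * ε * q := by
      field_simp
    have : (n : ℝ) * segUtil q ε a i < (n : ℝ) * ((1 / (n : ℝ) + ε) * q) := by
      rw [hgoal]
      rw [hNq] at hNM
      nlinarith
    exact lt_of_mul_lt_mul_left this (le_of_lt hN0)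
  have hqq : ((n : ℝ) * q) / (n : ℝ) = (q : ℝ) :=
    mul_div_cancel_left₀ (q : ℝ) (ne_of_gt hN0)
  constructor
  · intro i
    rw [hqq]
    exact main i
  · -- the proportional allocation: item t goes to agent t/q
    refine ⟨fun t => ⟨t.val / q, Nat.div_lt_of_lt_mul (lt_of_lt_of_eq t.isLt (Nat.mul_comm n q))⟩, ?_⟩
    intro i
    have ha' : segUtil q ε
        (fun t : Fin (n * q) =>
          (⟨t.val / q, Nat.div_lt_of_lt_mul (lt_of_lt_of_eq t.isLt (Nat.mul_comm n q))⟩ : Fin n)) i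
        = (q : ℝ) := by
      unfold segUtil
      have hpt : ∀ t : Fin (n * q),
          (if (⟨t.val / q, Nat.div_lt_of_lt_mul (lt_of_lt_of_eq t.isLt (Nat.mul_comm n q))⟩ : Fin n) = i
            then segVal q ε i t.val else 0)
          = (if i.val * q ≤ t.val ∧ t.val < (i.val + 1) * q then (1 : ℝ) else 0) := by
        intro t
        have hdiv : ((⟨t.val / q, Nat.div_lt_of_lt_mul (lt_of_lt_of_eq t.isLt (Nat.mul_comm n q))⟩ : Fin n) = i)
            ↔ (i.val * q ≤ t.val ∧ t.val < (i.val + 1) * q) := by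
          rw [Fin.ext_iff]
          constructor
          · intro h
            simp only at h
            constructor
            · rw [← h]
              exact Nat.div_mul_le_self _ _
            · rw [← h]
              have h2 : t.val < t.val / q * q + q := Nat.lt_div_mul_add hq
              rw [Nat.add_mul, one_mul]
              exact h2
          · rintro ⟨h1, h2⟩
            exact Nat.div_eq_of_lt_le h1 h2
        by_cases h : (⟨t.val / q, Nat.div_lt_of_lt_mul (lt_of_lt_of_eq t.isLt (Nat.mul_comm n q))⟩ : Fin n) = i
        · rw [if_pos h, if_pos (hdiv.mp h)]
          unfold segVal
          rw [if_pos (hdiv.mp h)]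
        · rw [if_neg h, if_neg (fun hc => h (hdiv.mpr hc))]
      rw [Finset.sum_congr rfl (fun t _ => hpt t)]
      rw [Fin.sum_univ_eq_sum_range
        (fun t => if i.val * q ≤ t ∧ t < (i.val + 1) * q then (1 : ℝ) else 0)]
      rw [← Finset.sum_filter, hIco i, Finset.sum_const, hIcoCard i, nsmul_eq_mul]
      ring
    rw [ha']
    have hc : (0 : ℝ) < 1 / (n : ℝ) + ε := by positivity
    rw [div_lt_iff₀ hc]
    have := main i
    nlinarith [main i]
end

section
/- Let (x, p) be a solution to the Eisenberg–Gale program with budgets e, and let K be a nonempty set of agents whose bundles are all identical (x_{ia} = x_{i'a} for all i, i' ∈ K and all a ∈ G); write X_K for this common bundle. Then: (i) for every item γ ∈ G with positive fraction in X_K, the item obtained from γ by replacing its coordinate in position i with h_i for every i ∈ K also has positive fraction in X_K; and consequently (ii) some item of G_H has positive fraction in X_K. -/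
open Finset

/-- The item types: one item for every combination of agent values,
`G = S_1 × ⋯ × S_n`. -/
abbrev ItemSpace (n : ℕ) (S : Fin n → Finset ℝ) := (i : Fin n) → {x : ℝ // x ∈ S i}

/-- Agent `i`'s scaled value for item `g = (a_1, …, a_n)`: `v'_i(g) = g_i·f(g)`. -/
def itemVal {n : ℕ} {S : Fin n → Finset ℝ} (f : ItemSpace n S → ℝ)
    (i : Fin n) (g : ItemSpace n S) : ℝ :=
  (g i).1 * f g

/-- `x` is a fractional allocation of the items `G` to the `n` agents. -/
def IsAllocG {n : ℕ} {S : Fin n → Finset ℝ} (x : Fin n → ItemSpace n S → ℝ) : Prop :=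
  (∀ i g, x i g ∈ Set.Icc (0 : ℝ) 1) ∧ ∀ g, ∑ i, x i g = 1

/-- Agent `i`'s utility for the fractional bundle `y`. -/
def bundleValG {n : ℕ} {S : Fin n → Finset ℝ} (f : ItemSpace n S → ℝ)
    (i : Fin n) (y : ItemSpace n S → ℝ) : ℝ :=
  ∑ g, itemVal f i g * y g

/-- `(x, p)` is a solution to the Eisenberg–Gale program with budgets `e`:
`e` and `p` are positive, `x` is a fractional allocation giving every agent positive
utility, and the KKT conditions hold. -/
def EGSolutionG {n : ℕ} {S : Fin n → Finset ℝ} (f : ItemSpace n S → ℝ)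
    (e : Fin n → ℝ) (p : ItemSpace n S → ℝ) (x : Fin n → ItemSpace n S → ℝ) : Prop :=
  (∀ i, 0 < e i) ∧ (∀ g, 0 < p g) ∧ IsAllocG x ∧ (∀ i, 0 < bundleValG f i (x i)) ∧
  (∀ g, ∑ i, x i g = 1) ∧
  (∀ i g, itemVal f i g / p g ≤ bundleValG f i (x i) / e i) ∧
  (∀ i g, 0 < x i g → itemVal f i g / p g = bundleValG f i (x i) / e i)

/-!
By the KKT conditions an agent `i` who buys an item `g` has the best ratio
`v'_k(g) / v'_i(g) ≤ β_k / β_i` against every other agent `k`, where `β` is the bang per buck,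
and `f g` cancels from this ratio. Suppose no agent of `K` buys `γ'`, the item `γ` raised to the
maxima on `K`. A buyer `j ∉ K` of `γ'` sees the same `j`-coordinate in `γ` and `γ'`; comparing `j`
on both items with an agent `i ∈ K` (who buys `γ`, as the bundles in `K` are equal) gives
`γ'_i ≤ γ_i`. Hence `γ' = γ`, which an agent of `K` buys after all.
-/

noncomputable def bangPerBuck {n : ℕ} {S : Fin n → Finset ℝ} (f : ItemSpace n S → ℝ)
    (e : Fin n → ℝ) (x : Fin n → ItemSpace n S → ℝ) (i : Fin n) : ℝ :=
  bundleValG f i (x i) / e i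

namespace EGSolutionG

variable {n : ℕ} {S : Fin n → Finset ℝ} {f : ItemSpace n S → ℝ} {e : Fin n → ℝ}
  {p : ItemSpace n S → ℝ} {x : Fin n → ItemSpace n S → ℝ}

theorem bangPerBuck_pos (h : EGSolutionG f e p x) (i : Fin n) : 0 < bangPerBuck f e x i :=
  div_pos (h.2.2.2.1 i) (h.1 i)

theorem exists_bought_item (h : EGSolutionG f e p x) (i : Fin n) : ∃ g, 0 < x i g := by
  obtain ⟨-, -, ⟨hx01, -⟩, hV, -⟩ := h
  obtain ⟨g, -, hg⟩ := Finset.exists_ne_zero_of_sum_ne_zero (hV i).ne'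
  exact ⟨g, (hx01 i g).1.lt_of_ne (right_ne_zero_of_mul hg).symm⟩

theorem exists_buyer (h : EGSolutionG f e p x) (g : ItemSpace n S) : ∃ j, 0 < x j g := by
  obtain ⟨-, -, -, -, hsum, -⟩ := h
  obtain ⟨j, -, hj⟩ := Finset.exists_lt_of_sum_lt (s := univ) (f := fun _ => (0 : ℝ))
    (g := fun j => x j g) (by rw [hsum g]; simp)
  exact ⟨j, hj⟩

theorem coord_mul_le_of_pos (h : EGSolutionG f e p x) {g : ItemSpace n S} (hf : 0 < f g)
    {i : Fin n} (hx : 0 < x i g) (k : Fin n) :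
    (g k).1 * bangPerBuck f e x i ≤ (g i).1 * bangPerBuck f e x k := by
  have hβi := h.bangPerBuck_pos i
  have hq : 0 < f g / p g := div_pos hf (h.2.1 g)
  have hbuy : (g i).1 * (f g / p g) = bangPerBuck f e x i := by
    rw [← mul_div_assoc]; exact h.2.2.2.2.2.2 i g hx
  have hcmp : (g k).1 * (f g / p g) ≤ bangPerBuck f e x k := by
    rw [← mul_div_assoc]; exact h.2.2.2.2.2.1 k g
  rw [← mul_le_mul_iff_of_pos_left hq]
  calc f g / p g * ((g k).1 * bangPerBuck f e x i)
      = (g k).1 * (f g / p g) * bangPerBuck f e x i := by ring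
    _ ≤ bangPerBuck f e x k * bangPerBuck f e x i := by gcongr
    _ = f g / p g * ((g i).1 * bangPerBuck f e x k) := by rw [← hbuy]; ring

theorem coord_le_of_pos_of_pos (h : EGSolutionG f e p x) (hf0 : ∀ g, 0 < f g)
    {γ γ' : ItemSpace n S} {i j : Fin n} (hi : 0 < x i γ) (hj : 0 < x j γ')
    (hγj : γ' j = γ j) : (γ' i).1 ≤ (γ i).1 := by
  refine le_of_mul_le_mul_right ?_ (h.bangPerBuck_pos j)
  calc (γ' i).1 * bangPerBuck f e x j
      ≤ (γ' j).1 * bangPerBuck f e x i := h.coord_mul_le_of_pos (hf0 γ') hj i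
    _ = (γ j).1 * bangPerBuck f e x i := by rw [hγj]
    _ ≤ (γ i).1 * bangPerBuck f e x j := h.coord_mul_le_of_pos (hf0 γ) hi j

theorem exists_mem_pos_of_le (h : EGSolutionG f e p x) (hf0 : ∀ g, 0 < f g) {K : Finset (Fin n)}
    (hsame : ∀ i ∈ K, ∀ i' ∈ K, ∀ g, x i g = x i' g) {γ γ' : ItemSpace n S}
    (hle : ∀ k ∈ K, (γ k).1 ≤ (γ' k).1) (hout : ∀ k ∉ K, γ' k = γ k)
    (hγ : ∃ i ∈ K, 0 < x i γ) : ∃ i ∈ K, 0 < x i γ' := by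
  by_contra! hnone
  obtain ⟨i0, hi0, hpos⟩ := hγ
  obtain ⟨j, hj⟩ := h.exists_buyer γ'
  have hjK : j ∉ K := fun hjK => (hnone j hjK).not_gt hj
  have hγ' : γ' = γ := funext fun k => by
    by_cases hk : k ∈ K
    · refine Subtype.ext (le_antisymm ?_ (hle k hk))
      exact h.coord_le_of_pos_of_pos hf0 (hsame i0 hi0 k hk γ ▸ hpos) hj (hout j hjK)
    · exact hout k hk
  exact (hnone i0 hi0).not_gt (hγ' ▸ hpos)

end EGSolutionG

theorem EG_clique_high_value_item_general
    (n : ℕ) (S : Fin n → Finset ℝ)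
    (hne : ∀ i, (S i).Nonempty)
    (f : ItemSpace n S → ℝ) (hf0 : ∀ g, 0 < f g)
    (e : Fin n → ℝ) (p : ItemSpace n S → ℝ) (x : Fin n → ItemSpace n S → ℝ)
    (hEG : EGSolutionG f e p x)
    (K : Finset (Fin n)) (hK : K.Nonempty)
    (hsame : ∀ i ∈ K, ∀ i' ∈ K, ∀ g, x i g = x i' g) :
    (∀ γ : ItemSpace n S, (∃ i ∈ K, 0 < x i γ) →
      ∃ i ∈ K, 0 < x i (fun i' => if i' ∈ K then
          ⟨(S i').max' (hne i'), (S i').max'_mem (hne i')⟩ else γ i')) ∧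
    (∃ γ : ItemSpace n S,
      (∀ i ∈ K, (γ i).1 = (S i).max' (hne i)) ∧ ∃ i ∈ K, 0 < x i γ) := by
  have raise : ∀ γ : ItemSpace n S, (∃ i ∈ K, 0 < x i γ) →
      ∃ i ∈ K, 0 < x i (fun i' => if i' ∈ K then
          ⟨(S i').max' (hne i'), (S i').max'_mem (hne i')⟩ else γ i') := fun γ hγ =>
    hEG.exists_mem_pos_of_le hf0 hsame
      (fun k hk => by simpa [hk] using (S k).le_max' _ (γ k).2) (fun k hk => by simp [hk]) hγ
  refine ⟨raise, ?_⟩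
  obtain ⟨i0, hi0⟩ := hK
  obtain ⟨γ, hγ⟩ := hEG.exists_bought_item i0
  exact ⟨_, fun k hk => by simp [hk], raise γ ⟨i0, hi0, hγ⟩⟩

/-- Let `(x, p)` solve the Eisenberg–Gale program, and let `K` be a nonempty set of
agents with identical bundles.  Then (i) for every item `γ` with positive fraction in
the common bundle, the item obtained from `γ` by raising every coordinate in `K` to the
corresponding maximum value `h_i = max S_i` also has positive fraction in the common
bundle; and consequently (ii) some item of `G_H` (an item whose coordinates in `K` are
all the maxima `h_i`) has positive fraction in the common bundle. -/
theorem EG_clique_high_value_item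
    (n : ℕ) (S : Fin n → Finset ℝ)
    (hS01 : ∀ i, ∀ x ∈ S i, x ∈ Set.Icc (0 : ℝ) 1)
    (hScard : ∀ i, 2 ≤ (S i).card)
    (hne : ∀ i, (S i).Nonempty)
    (f : ItemSpace n S → ℝ) (hf0 : ∀ g, 0 < f g) (hf1 : ∀ g, f g ≤ 1)
    (hfsum : ∑ g, f g = 1)
    (e : Fin n → ℝ) (p : ItemSpace n S → ℝ) (x : Fin n → ItemSpace n S → ℝ)
    (hEG : EGSolutionG f e p x)
    (K : Finset (Fin n)) (hK : K.Nonempty)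
    (hsame : ∀ i ∈ K, ∀ i' ∈ K, ∀ g, x i g = x i' g) :
    (∀ γ : ItemSpace n S, (∃ i ∈ K, 0 < x i γ) →
      ∃ i ∈ K, 0 < x i (fun i' => if i' ∈ K then
          ⟨(S i').max' (hne i'), (S i').max'_mem (hne i')⟩ else γ i')) ∧
    (∃ γ : ItemSpace n S,
      (∀ i ∈ K, (γ i).1 = (S i).max' (hne i)) ∧ ∃ i ∈ K, 0 < x i γ) :=
  EG_clique_high_value_item_general n S hne f hf0 e p x hEG K hK hsame
end

section
/- Let (x, p) be a solution to the Eisenberg–Gale program with budgets e, and let K be a set of at least two agents whose bundles are all identical (x_{ia} = x_{i'a} for all i, i' ∈ K and all a ∈ G), with common bundle X_K. Then for every i ∈ K, no item of G_{H^i} has positive fraction in X_K. -/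
open Finset

/-- Let `(x, p)` solve the Eisenberg–Gale program, and let `K` be a set of at least two
agents with identical bundles.  Then for every `i ∈ K`, no item of `G_{H^i}` (an item
whose `i`-th coordinate is `h_i = max S_i` and whose coordinates at all other agents of
`K` are the minima `l_{i'} = min S_{i'}`) has positive fraction in the common bundle. -/
theorem EG_clique_no_high_low_item
    (n : ℕ) (S : Fin n → Finset ℝ)
    (hS01 : ∀ i, ∀ x ∈ S i, x ∈ Set.Icc (0 : ℝ) 1)
    (hScard : ∀ i, 2 ≤ (S i).card)
    (hne : ∀ i, (S i).Nonempty)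
    (f : ItemSpace n S → ℝ) (hf0 : ∀ g, 0 < f g) (hf1 : ∀ g, f g ≤ 1)
    (hfsum : ∑ g, f g = 1)
    (e : Fin n → ℝ) (p : ItemSpace n S → ℝ) (x : Fin n → ItemSpace n S → ℝ)
    (hEG : EGSolutionG f e p x)
    (K : Finset (Fin n)) (hK : 2 ≤ K.card)
    (hsame : ∀ i ∈ K, ∀ i' ∈ K, ∀ g, x i g = x i' g) :
    ∀ i ∈ K, ∀ γ : ItemSpace n S,
      (γ i).1 = (S i).max' (hne i) →
      (∀ i' ∈ K, i' ≠ i → (γ i').1 = (S i').min' (hne i')) →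
      ∀ j ∈ K, ¬ 0 < x j γ := by
  intro i hi γ hγi hγK j hj hpos
  obtain ⟨he, hp, ⟨hx01, hxsum⟩, hval, hsum1, hkkt1, hkkt2⟩ := hEG
  have hxiγ : 0 < x i γ := by rw [hsame i hi j hj γ]; exact hpos
  obtain ⟨i', hi', hne'⟩ := Finset.exists_mem_ne hK i
  have hxi'γ : 0 < x i' γ := by rw [hsame i' hi' j hj γ]; exact hpos
  set c := f γ / p γ with hcdef
  have hc : 0 < c := div_pos (hf0 γ) (hp γ)
  have key : ∀ k, itemVal f k γ / p γ = (γ k).1 * c := by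
    intro k; rw [itemVal, hcdef, mul_div_assoc]
  -- equality for i at γ
  have eqi : (γ i).1 * c = bundleValG f i (x i) / e i := by
    rw [← key]; exact hkkt2 i γ hxiγ
  have eqi' : (γ i').1 * c = bundleValG f i' (x i') / e i' := by
    rw [← key]; exact hkkt2 i' γ hxi'γ
  have hβi : 0 < bundleValG f i (x i) / e i := div_pos (hval i) (he i)
  have hγipos : 0 < (γ i).1 := by
    by_contra h
    push_neg at h
    have : (γ i).1 * c ≤ 0 := mul_nonpos_of_nonpos_of_nonneg h hc.le
    linarith [eqi ▸ this]
  -- the modified item γ'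
  set h' := (S i').max' (hne i') with hh'
  set l' := (S i').min' (hne i') with hl'
  have hl'h' : l' < h' := Finset.min'_lt_max'_of_card (S i') (by have := hScard i'; omega)
  set γ' : ItemSpace n S := Function.update γ i' ⟨h', (S i').max'_mem (hne i')⟩ with hγ'def
  have hγ'i' : (γ' i').1 = h' := by simp [hγ'def]
  have hγ'k : ∀ k, k ≠ i' → γ' k = γ k := by
    intro k hk; simp [hγ'def, Function.update_of_ne hk]
  set c' := f γ' / p γ' with hc'def
  have hc' : 0 < c' := div_pos (hf0 γ') (hp γ')
  have key' : ∀ k, itemVal f k γ' / p γ' = (γ' k).1 * c' := by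
    intro k; rw [itemVal, hc'def, mul_div_assoc]
  -- upper bound : c' ≤ c
  have hii' : i ≠ i' := fun h => hne' (h.symm)
  have hγ'i : (γ' i).1 = (γ i).1 := by rw [hγ'k i hii']
  have hupper : c' ≤ c := by
    have h1 : (γ' i).1 * c' ≤ bundleValG f i (x i) / e i := by
      rw [← key']; exact hkkt1 i γ'
    rw [hγ'i, ← eqi] at h1
    exact le_of_mul_le_mul_left h1 hγipos
  -- lower bound : c ≤ c'
  have hlower : c ≤ c' := by
    -- some agent owns a positive fraction of γ'
    have hexists : ∃ k, 0 < x k γ' := by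
      by_contra h
      push_neg at h
      have hz : ∀ k, x k γ' = 0 := fun k => le_antisymm (h k) (hx01 k γ').1
      have : (1 : ℝ) = 0 := by rw [← hsum1 γ']; simp [hz]
      norm_num at this
    obtain ⟨k, hk⟩ := hexists
    by_cases hkK : k ∈ K
    · have hxiγ' : 0 < x i γ' := by rw [hsame i hi k hkK γ']; exact hk
      have h1 : (γ' i).1 * c' = bundleValG f i (x i) / e i := by
        rw [← key']; exact hkkt2 i γ' hxiγ'
      rw [hγ'i, ← eqi] at h1
      have := mul_left_cancel₀ (ne_of_gt hγipos) h1
      linarith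
    · have hki' : k ≠ i' := fun h => hkK (h ▸ hi')
      have hγ'kk : (γ' k).1 = (γ k).1 := by rw [hγ'k k hki']
      have h1 : (γ' k).1 * c' = bundleValG f k (x k) / e k := by
        rw [← key']; exact hkkt2 k γ' hk
      have h2 : (γ k).1 * c ≤ bundleValG f k (x k) / e k := by
        rw [← key]; exact hkkt1 k γ
      have hβk : 0 < bundleValG f k (x k) / e k := div_pos (hval k) (he k)
      rw [hγ'kk] at h1
      have hγkpos : 0 < (γ k).1 := by
        by_contra hcon
        push_neg at hcon
        have : (γ k).1 * c' ≤ 0 := mul_nonpos_of_nonpos_of_nonneg hcon hc'.le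
        linarith [h1 ▸ this]
      have h3 : (γ k).1 * c ≤ (γ k).1 * c' := by rw [h1]; exact h2
      exact le_of_mul_le_mul_left h3 hγkpos
  have hcc : c' = c := le_antisymm hupper hlower
  -- final contradiction at γ' for agent i'
  have hγi'l : (γ i').1 = l' := hγK i' hi' hne'
  have hfin : h' * c' ≤ l' * c := by
    have h1 : (γ' i').1 * c' ≤ bundleValG f i' (x i') / e i' := by
      rw [← key']; exact hkkt1 i' γ'
    rw [hγ'i', ← eqi', hγi'l] at h1
    exact h1
  rw [hcc] at hfin
  have : h' ≤ l' := le_of_mul_le_mul_right (by linarith [hfin]) hc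
  linarith
end

section
/- Let (x, p) be a solution to the Eisenberg–Gale program with budgets e such that x is envy-free, and let S be a weakly connected component of I(x) on which all budgets e_i are equal. Then there exists a fractional allocation x' with x'_i = x_i for every agent i ∉ S such that: (x', p) is a solution to the Eisenberg–Gale program with the same budgets e; x' is envy-free; every edge of I(x') is an edge of I(x) (no new indifference edges are created); the restriction of I(x') to S is clique acyclic; and any two agents of S lying in the same clique of the witnessing partition have identical bundles under x'. -/
open Finset

/-- `X` is envy-free under valuations `v`. -/
def EnvyFree {n m : ℕ} (v : Fin n → Fin m → ℝ) (X : Fin n → Fin m → ℝ) : Prop :=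
  ∀ i j, val v i (X j) ≤ val v i (X i)

/-- The indifference graph `I(X)` has an edge from `i` to `j` iff `i ≠ j` and
`i` is indifferent between its own bundle and `j`'s bundle. -/
def IndifEdge {n m : ℕ} (v : Fin n → Fin m → ℝ) (X : Fin n → Fin m → ℝ)
    (i j : Fin n) : Prop :=
  i ≠ j ∧ val v i (X i) = val v i (X j)

/-- One step in the underlying undirected graph of `I(X)`. -/
def UndirStep {n m : ℕ} (v : Fin n → Fin m → ℝ) (X : Fin n → Fin m → ℝ)
    (i j : Fin n) : Prop :=
  IndifEdge v X i j ∨ IndifEdge v X j i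

/-- `S` is a weakly connected component of the indifference graph `I(X)`:
the set of vertices reachable from some vertex in the underlying undirected graph. -/
def IsWCC {n m : ℕ} (v : Fin n → Fin m → ℝ) (X : Fin n → Fin m → ℝ)
    (S : Set (Fin n)) : Prop :=
  ∃ i₀, S = {j | Relation.ReflTransGen (UndirStep v X) i₀ j}

/-- The directed graph with edge relation `E`, restricted to the vertex set `S`, is
clique acyclic with witnessing partition (labelling) `c`: agents of `S` with the same
label form a clique, and every directed cycle inside `S` stays within one label
class. -/
def CliqueAcyclicOn {n : ℕ} (E : Fin n → Fin n → Prop) (S : Set (Fin n))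
    (c : Fin n → ℕ) : Prop :=
  (∀ i ∈ S, ∀ j ∈ S, i ≠ j → c i = c j → E i j) ∧
  (∀ (k : ℕ) (cyc : Fin (k + 1) → Fin n), (∀ t, cyc t ∈ S) →
    (∀ t, E (cyc t) (cyc (t + 1))) → ∀ t t', c (cyc t) = c (cyc t'))

/-!
Let `R` be the indifference graph `I(x)` with its edges restricted to sources in `S`, and let
`N(a)` consist of `a` and its `R`-successors in its own strongly connected component. Averaging
the permutation matrices of all permutations `σ` with `σ a ∈ N(a)` for every `a` gives a doubly
stochastic matrix `M` whose row `a` is supported exactly on `N(a)`: by Hall's theorem every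
edge lying on a cycle extends to such a permutation. Agents with the same `N` get the same row,
since precomposing with their transposition permutes the admissible permutations.

Put `x' = M x`. Each agent of `S` receives a mixture of bundles it is indifferent to, so
utilities, envy-freeness and the item totals are preserved, and `x'` creates no new indifference.
As budgets agree on `S`, a bundle that an agent of `S` values as much as its own is bought with
the same budget, so it contains only that agent's maximum bang-per-buck items and the KKT
conditions survive. Finally an edge `a → b` of `I(x')` on a cycle forces `N(b) ⊆ N(a)`, so `N`
is constant along cycles of `I(x')`: the classes of `N` witness clique acyclicity.
-/

open Matrix Relation

namespace Relation

variable {α : Type*} {R : α → α → Prop}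

open Fin.NatCast in
theorem reflTransGen_of_cycle {k : ℕ} {cyc : Fin (k + 1) → α}
    (hcyc : ∀ t, R (cyc t) (cyc (t + 1))) (t t' : Fin (k + 1)) :
    ReflTransGen R (cyc t) (cyc t') := by
  have along : ∀ s : ℕ, ReflTransGen R (cyc t) (cyc (t + s)) := by
    intro s
    induction s with
    | zero => simpa using ReflTransGen.refl
    | succ s ih => simpa [add_assoc] using ih.tail (hcyc _)
  simpa using along (t' - t).val

theorem apply_eq_of_cycle {β : Type*} [PartialOrder β] {f : α → β} {k : ℕ}
    {cyc : Fin (k + 1) → α} (hf : ∀ t, f (cyc (t + 1)) ≤ f (cyc t)) (t t' : Fin (k + 1)) :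
    f (cyc t) = f (cyc t') := by
  have hle : ∀ {a b}, ReflTransGen (fun a b => f b ≤ f a) a b → f b ≤ f a := fun h => by
    induction h with
    | refl => exact le_rfl
    | tail _ hbc ih => exact hbc.trans ih
  exact le_antisymm (hle (reflTransGen_of_cycle hf t' t)) (hle (reflTransGen_of_cycle hf t t'))

theorem ReflTransGen.exists_exit {B : Set α} {a b : α} (h : ReflTransGen R a b)
    (ha : a ∈ B) (hb : b ∉ B) :
    ∃ c ∈ B, ∃ d ∉ B, ReflTransGen R a c ∧ R c d ∧ ReflTransGen R d b := by
  induction h with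
  | refl => exact absurd ha hb
  | @tail c d hac hcd ih =>
    by_cases hc : c ∈ B
    · exact ⟨c, hc, d, hb, hac, hcd, .refl⟩
    · obtain ⟨c', hc', d', hd', hac', hcd', hdc⟩ := ih hc
      exact ⟨c', hc', d', hd', hac', hcd', hdc.tail hcd⟩

def CycleEdge (R : α → α → Prop) (a b : α) : Prop :=
  b = a ∨ R a b ∧ ReflTransGen R b a

theorem CycleEdge.refl (a : α) : CycleEdge R a a := Or.inl rfl

theorem CycleEdge.eq_or_rel {a b : α} (h : CycleEdge R a b) : b = a ∨ R a b :=
  h.imp_right And.left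

open scoped Classical in
noncomputable def cycleNbhd [Fintype α] (R : α → α → Prop) (a : α) : Finset α :=
  {b | CycleEdge R a b}

theorem mem_cycleNbhd [Fintype α] {a b : α} : b ∈ cycleNbhd R a ↔ CycleEdge R a b := by
  simp [cycleNbhd]

theorem exists_perm_cycleEdge [Fintype α] {i l : α} (hil : R i l)
    (hli : ReflTransGen R l i) : ∃ σ : Equiv.Perm α, σ i = l ∧ ∀ a, CycleEdge R a (σ a) := by
  classical
  let r a b := CycleEdge R a b ∧ (a = i → b = l)
  suffices ∃ f : α → α, Function.Injective f ∧ ∀ a, r a (f a) by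
    obtain ⟨f, hf, hr⟩ := this
    exact ⟨.ofBijective f (Finite.injective_iff_bijective.mp hf), (hr i).2 rfl,
      fun a => (hr a).1⟩
  refine (Fintype.all_card_le_filter_rel_iff_exists_injective r).mp fun A => ?_
  have hstay : ∀ a ∈ A, a ≠ i → a ∈ ({b | ∃ a ∈ A, r a b} : Finset α) := fun a ha hai =>
    mem_filter.2 ⟨mem_univ _, a, ha, .refl a, fun h => absurd h hai⟩
  by_cases hi : i ∈ A
  -- besides `A.erase i` itself, the image contains `l`, or, if `l ∈ A.erase i`, the vertex
  -- where a path from `l` back to `i` leaves `A.erase i`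
  · obtain ⟨y, hy, hyA⟩ : ∃ y ∉ A.erase i, ∃ a ∈ A, r a y := by
      by_cases hl : l ∈ A.erase i
      · obtain ⟨c, hc, d, hd, hlc, hcd, hdi⟩ :=
          hli.exists_exit (B := ↑(A.erase i)) hl (by simp)
        exact ⟨d, hd, c, mem_of_mem_erase hc, Or.inr ⟨hcd, (hdi.tail hil).trans hlc⟩,
          fun h => absurd h (ne_of_mem_erase hc)⟩
      · exact ⟨l, hl, i, hi, Or.inr ⟨hil, hli⟩, fun _ => rfl⟩
    calc #A = #(insert y (A.erase i)) := by
          rw [card_insert_of_notMem hy, card_erase_add_one hi]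
      _ ≤ _ := card_le_card <| insert_subset (mem_filter.2 ⟨mem_univ _, hyA⟩)
          fun a ha => hstay a (mem_of_mem_erase ha) (ne_of_mem_erase ha)
  · exact card_le_card fun a ha => hstay a ha (by rintro rfl; exact hi ha)

section CycleCover

variable [Fintype α] [DecidableEq α] (R)

open scoped Classical in
noncomputable def cycleCovers : Finset (Equiv.Perm α) :=
  {σ | ∀ a, CycleEdge R a (σ a)}

noncomputable def cycleCoverMatrix : Matrix α α ℝ :=
  (#(cycleCovers R) : ℝ)⁻¹ • ∑ σ ∈ cycleCovers R, σ.permMatrix ℝ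

variable {R}

theorem mem_cycleCovers {σ : Equiv.Perm α} :
    σ ∈ cycleCovers R ↔ ∀ a, CycleEdge R a (σ a) := by
  simp [cycleCovers]

theorem one_mem_cycleCovers : 1 ∈ cycleCovers R :=
  mem_cycleCovers.2 fun a => .refl a

theorem cycleCovers_nonempty : (cycleCovers R).Nonempty :=
  ⟨1, one_mem_cycleCovers⟩

theorem cycleCoverMatrix_apply (a b : α) :
    cycleCoverMatrix R a b = #{σ ∈ cycleCovers R | σ a = b} / #(cycleCovers R) := by
  simp [cycleCoverMatrix, Matrix.sum_apply, PEquiv.toMatrix_apply, div_eq_inv_mul]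

theorem cycleCoverMatrix_mem_doublyStochastic : cycleCoverMatrix R ∈ doublyStochastic ℝ α := by
  rw [cycleCoverMatrix, smul_sum]
  refine convex_doublyStochastic.sum_mem (fun _ _ => by positivity) ?_
    fun _ _ => permMatrix_mem_doublyStochastic
  rw [sum_const, nsmul_eq_mul, mul_inv_cancel₀]
  exact_mod_cast cycleCovers_nonempty.card_pos.ne'

theorem cycleCoverMatrix_mem_rowStochastic : cycleCoverMatrix R ∈ rowStochastic ℝ α :=
  (mem_doublyStochastic_iff_mem_rowStochastic_and_mem_colStochastic.1
    cycleCoverMatrix_mem_doublyStochastic).1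

theorem cycleCoverMatrix_pos_iff {a b : α} : 0 < cycleCoverMatrix R a b ↔ CycleEdge R a b := by
  rw [cycleCoverMatrix_apply,
    div_pos_iff_of_pos_right (by exact_mod_cast cycleCovers_nonempty.card_pos), Nat.cast_pos,
    card_pos]
  constructor
  · rintro ⟨σ, hσ⟩
    rw [mem_filter] at hσ
    exact hσ.2 ▸ mem_cycleCovers.1 hσ.1 a
  · rintro (rfl | ⟨hab, hba⟩)
    · exact ⟨1, mem_filter.2 ⟨one_mem_cycleCovers, rfl⟩⟩
    · obtain ⟨σ, hσa, hσ⟩ := exists_perm_cycleEdge hab hba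
      exact ⟨σ, mem_filter.2 ⟨mem_cycleCovers.2 hσ, hσa⟩⟩

theorem mul_swap_mem_cycleCovers {a b : α} (hab : cycleNbhd R a = cycleNbhd R b)
    {σ : Equiv.Perm α} (hσ : σ ∈ cycleCovers R) : σ * Equiv.swap a b ∈ cycleCovers R := by
  simp only [Finset.ext_iff, mem_cycleNbhd] at hab
  rw [mem_cycleCovers] at hσ ⊢
  intro c
  rcases eq_or_ne c a with rfl | hca
  · simpa using (hab _).2 (hσ b)
  rcases eq_or_ne c b with rfl | hcb
  · simpa using (hab _).1 (hσ a)
  simpa [Equiv.swap_apply_of_ne_of_ne hca hcb] using hσ c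

theorem cycleCoverMatrix_row_eq {a b : α} (hab : cycleNbhd R a = cycleNbhd R b) :
    cycleCoverMatrix R a = cycleCoverMatrix R b := by
  ext c
  simp only [cycleCoverMatrix_apply]
  congr 2
  -- precomposing with `swap a b` exchanges the covers sending `a` to `c` and those sending `b`
  -- to `c`
  refine card_nbij' (· * Equiv.swap a b) (· * Equiv.swap a b) ?_ ?_ ?_ ?_
  all_goals intro σ hσ; simp_all [mul_swap_mem_cycleCovers hab]

end CycleCover

end Relation

namespace Matrix

variable {ι κ 𝕜 : Type*} [Fintype ι] [DecidableEq ι] [Field 𝕜] [LinearOrder 𝕜]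
  [IsStrictOrderedRing 𝕜] {M : Matrix ι ι 𝕜}

theorem sum_mul_le_of_mem_rowStochastic (hM : M ∈ rowStochastic 𝕜 ι) {f : ι → 𝕜} {c : 𝕜}
    (hf : ∀ l, f l ≤ c) (j : ι) : ∑ l, M j l * f l ≤ c :=
  calc ∑ l, M j l * f l ≤ ∑ l, M j l * c :=
        sum_le_sum fun l _ => mul_le_mul_of_nonneg_left (hf l) (nonneg_of_mem_rowStochastic hM)
    _ = c := by rw [← sum_mul, sum_row_of_mem_rowStochastic hM, one_mul]

theorem eq_of_sum_mul_eq_of_mem_rowStochastic (hM : M ∈ rowStochastic 𝕜 ι) {f : ι → 𝕜}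
    {c : 𝕜} (hf : ∀ l, f l ≤ c) {j l : ι} (h : ∑ l, M j l * f l = c) (hl : 0 < M j l) :
    f l = c := by
  have hle : ∀ l ∈ univ, M j l * f l ≤ M j l * c := fun l _ =>
    mul_le_mul_of_nonneg_left (hf l) (nonneg_of_mem_rowStochastic hM)
  rw [← one_mul c, ← sum_row_of_mem_rowStochastic hM j, sum_mul] at h
  exact mul_left_cancel₀ hl.ne' ((sum_eq_sum_iff_of_le hle).1 h l (mem_univ l))

theorem mul_apply_eq_of_mem_rowStochastic (hM : M ∈ rowStochastic 𝕜 ι) {a : ι}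
    (hsupp : ∀ l, 0 < M a l → l = a) (N : Matrix ι κ 𝕜) : (M * N) a = N a := by
  have hzero : ∀ l ≠ a, M a l = 0 := fun l hl =>
    ((nonneg_of_mem_rowStochastic hM).eq_or_lt.resolve_right (mt (hsupp l) hl)).symm
  have hone : M a a = 1 := by
    rw [← sum_row_of_mem_rowStochastic hM a, sum_eq_single a (fun l _ => hzero l) (by simp)]
  funext k
  rw [mul_apply, sum_eq_single a (fun l _ hl => by rw [hzero l hl, zero_mul]) (by simp), hone,
    one_mul]

end Matrix

section Mixing

variable {n m : ℕ} {v : Fin n → Fin m → ℝ} {x : Fin n → Fin m → ℝ}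
  {M : Matrix (Fin n) (Fin n) ℝ}

theorem val_mul_apply (a j : Fin n) :
    val v a ((M * of x) j) = ∑ l, M j l * val v a (x l) := by
  simp only [_root_.val, mul_apply, of_apply, mul_sum]
  rw [sum_comm]
  exact sum_congr rfl fun _ _ => sum_congr rfl fun _ _ => by ring

theorem val_mul_apply_self (hM : M ∈ rowStochastic ℝ (Fin n))
    (hind : ∀ a l, 0 < M a l → val v a (x l) = val v a (x a)) (a : Fin n) :
    val v a ((M * of x) a) = val v a (x a) := by
  rw [val_mul_apply, ← one_mul (val v a (x a)), ← sum_row_of_mem_rowStochastic hM a, sum_mul]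
  refine sum_congr rfl fun l _ => ?_
  rcases (nonneg_of_mem_rowStochastic hM (i := a) (j := l)).eq_or_lt with h | h
  · rw [← h, zero_mul, zero_mul]
  · rw [hind a l h]

namespace EnvyFree

theorem mul (hEF : EnvyFree v x) (hM : M ∈ rowStochastic ℝ (Fin n))
    (hind : ∀ a l, 0 < M a l → val v a (x l) = val v a (x a)) : EnvyFree v (M * of x) :=
  fun a j => by
    rw [val_mul_apply, val_mul_apply_self hM hind]
    exact sum_mul_le_of_mem_rowStochastic hM (hEF a) j

theorem val_eq_of_val_mul_eq (hEF : EnvyFree v x) (hM : M ∈ rowStochastic ℝ (Fin n))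
    {a j l : Fin n} (h : val v a ((M * of x) j) = val v a (x a)) (hl : 0 < M j l) :
    val v a (x l) = val v a (x a) :=
  eq_of_sum_mul_eq_of_mem_rowStochastic hM (hEF a) (by rwa [← val_mul_apply]) hl

theorem indifEdge_of_indifEdge_mul (hEF : EnvyFree v x) (hM : M ∈ rowStochastic ℝ (Fin n))
    (hind : ∀ a l, 0 < M a l → val v a (x l) = val v a (x a)) (hdiag : ∀ j, 0 < M j j)
    {a j : Fin n} (h : IndifEdge v (M * of x) a j) : IndifEdge v x a j :=
  ⟨h.1, (hEF.val_eq_of_val_mul_eq hM (by rw [← h.2, val_mul_apply_self hM hind]) (hdiag j)).symm⟩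

end EnvyFree

namespace EGSolution

variable {e : Fin n → ℝ} {p : Fin m → ℝ}

theorem sum_price_mul_eq (h : EGSolution v e p x) (l : Fin n) : ∑ k, p k * x l k = e l := by
  obtain ⟨he, hp, hx, hval, -, -, hkkt⟩ := h
  have hterm : ∀ k, v l k * x l k = val v l (x l) / e l * (p k * x l k) := by
    intro k
    rcases (hx.1 l k).1.eq_or_lt with h0 | hpos
    · rw [← h0, mul_zero, mul_zero, mul_zero]
    · rw [← hkkt l k hpos]
      field_simp [(hp k).ne']
  have : val v l (x l) = val v l (x l) / e l * ∑ k, p k * x l k := by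
    rw [mul_sum]
    exact sum_congr rfl fun k _ => hterm k
  field_simp [(he l).ne', (hval l).ne'] at this
  exact this.symm

theorem div_eq_of_indifferent (h : EGSolution v e p x) {i l : Fin n} {k : Fin m}
    (hil : val v i (x l) = val v i (x i)) (he : e l = e i) (hk : 0 < x l k) :
    v i k / p k = val v i (x i) / e i := by
  have hspend := h.sum_price_mul_eq l
  obtain ⟨hepos, hp, hx, -, -, hkkt, -⟩ := h
  set r := val v i (x i) / e i
  have hle : ∀ k ∈ univ, v i k * x l k ≤ r * p k * x l k := fun k _ =>
    mul_le_mul_of_nonneg_right ((div_le_iff₀ (hp k)).1 (hkkt i k)) (hx.1 l k).1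
  have hsum : ∑ k, v i k * x l k = ∑ k, r * p k * x l k :=
    calc ∑ k, v i k * x l k = r * e l := by
          rw [← _root_.val, hil, he, div_mul_cancel₀ _ (hepos i).ne']
      _ = _ := by rw [← hspend, mul_sum]; simp only [mul_assoc]
  rw [div_eq_iff (hp k).ne']
  exact mul_right_cancel₀ hk.ne' ((sum_eq_sum_iff_of_le hle).1 hsum k (mem_univ k))

theorem mul (h : EGSolution v e p x) (hM : M ∈ doublyStochastic ℝ (Fin n))
    (hind : ∀ a l, 0 < M a l → val v a (x l) = val v a (x a))
    (hmbb : ∀ i l k, 0 < M i l → 0 < x l k → v i k / p k = val v i (x i) / e i) :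
    EGSolution v e p (M * of x) := by
  obtain ⟨he, hp, hx, hval, hsum, hkkt, -⟩ := h
  have hrow := (mem_doublyStochastic_iff_mem_rowStochastic_and_mem_colStochastic.1 hM).1
  have hnonneg : ∀ i k, 0 ≤ (M * of x) i k := fun i k => by
    rw [mul_apply]
    exact sum_nonneg fun l _ => mul_nonneg (nonneg_of_mem_doublyStochastic hM) (hx.1 l k).1
  have hcol : ∀ k, ∑ i, (M * of x) i k = 1 := fun k => by
    simp only [mul_apply, of_apply]
    rw [sum_comm]
    simp only [← sum_mul, sum_col_of_mem_doublyStochastic hM, one_mul, hsum]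
  have hle : ∀ i k, (M * of x) i k ≤ 1 := fun i k =>
    hcol k ▸ single_le_sum (fun i _ => hnonneg i k) (mem_univ i)
  refine ⟨he, hp, ⟨fun i k => ⟨hnonneg i k, hle i k⟩, hcol⟩, fun i => ?_, hcol,
    fun i k => ?_, fun i k hpos => ?_⟩
  · exact val_mul_apply_self hrow hind i ▸ hval i
  · exact val_mul_apply_self hrow hind i ▸ hkkt i k
  · rw [mul_apply] at hpos
    obtain ⟨l, -, hl⟩ := exists_ne_zero_of_sum_ne_zero hpos.ne'
    rw [val_mul_apply_self hrow hind]
    exact hmbb i l k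
      ((nonneg_of_mem_doublyStochastic hM).lt_of_ne (left_ne_zero_of_mul hl).symm)
      ((hx.1 l k).1.lt_of_ne (right_ne_zero_of_mul hl).symm)

end EGSolution

end Mixing

section Component

variable {n m : ℕ} {v : Fin n → Fin m → ℝ} {x : Fin n → Fin m → ℝ} {S : Set (Fin n)}

-- Restricting the sources to `S` makes the cycle-cover matrix the identity outside `S`.
def IndifEdgeOn (v : Fin n → Fin m → ℝ) (x : Fin n → Fin m → ℝ) (S : Set (Fin n))
    (a b : Fin n) : Prop :=
  a ∈ S ∧ IndifEdge v x a b

theorem IsWCC.mem_of_indifEdge (hS : IsWCC v x S) {i l : Fin n} (hi : i ∈ S)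
    (h : IndifEdge v x i l) : l ∈ S := by
  obtain ⟨i₀, rfl⟩ := hS
  exact ReflTransGen.tail hi (Or.inl h)

theorem val_eq_of_cycleCoverMatrix_pos {a l : Fin n}
    (h : 0 < cycleCoverMatrix (IndifEdgeOn v x S) a l) : val v a (x l) = val v a (x a) := by
  rcases (cycleCoverMatrix_pos_iff.1 h).eq_or_rel with rfl | ⟨-, -, h⟩
  · rfl
  · exact h.symm

theorem cycleCoverMatrix_mul_apply_of_notMem {i : Fin n} (hi : i ∉ S) :
    (cycleCoverMatrix (IndifEdgeOn v x S) * of x) i = x i :=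
  mul_apply_eq_of_mem_rowStochastic cycleCoverMatrix_mem_rowStochastic
    (fun _ hl => (cycleCoverMatrix_pos_iff.1 hl).eq_or_rel.resolve_right fun h => hi h.1) _

theorem EGSolution.div_eq_of_cycleCoverMatrix_pos {e : Fin n → ℝ} {p : Fin m → ℝ}
    (hEG : EGSolution v e p x) (hS : IsWCC v x S) (hbudget : ∀ i ∈ S, ∀ j ∈ S, e i = e j)
    {i l : Fin n} {k : Fin m} (hil : 0 < cycleCoverMatrix (IndifEdgeOn v x S) i l)
    (hk : 0 < x l k) : v i k / p k = val v i (x i) / e i := by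
  rcases (cycleCoverMatrix_pos_iff.1 hil).eq_or_rel with rfl | ⟨hi, hE⟩
  · obtain ⟨-, -, -, -, -, -, hkkt⟩ := hEG
    exact hkkt l k hk
  · exact hEG.div_eq_of_indifferent hE.2.symm (hbudget l (hS.mem_of_indifEdge hi hE) i hi) hk

theorem EnvyFree.indifEdge_of_indifEdge_cycleCoverMatrix_mul (hEF : EnvyFree v x) {a j : Fin n}
    (h : IndifEdge v (cycleCoverMatrix (IndifEdgeOn v x S) * of x) a j) : IndifEdge v x a j :=
  hEF.indifEdge_of_indifEdge_mul cycleCoverMatrix_mem_rowStochastic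
    (fun _ _ => val_eq_of_cycleCoverMatrix_pos) (fun j => cycleCoverMatrix_pos_iff.2 (.refl j)) h

theorem EnvyFree.cycleNbhd_subset (hEF : EnvyFree v x) {a b : Fin n} (ha : a ∈ S)
    (hab : IndifEdge v (cycleCoverMatrix (IndifEdgeOn v x S) * of x) a b)
    (hba : ReflTransGen (IndifEdgeOn v x S) b a) :
    cycleNbhd (IndifEdgeOn v x S) b ⊆ cycleNbhd (IndifEdgeOn v x S) a := by
  intro l hbl
  rw [mem_cycleNbhd] at hbl ⊢
  have hrow := cycleCoverMatrix_mem_rowStochastic (R := IndifEdgeOn v x S)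
  have hval : val v a (x l) = val v a (x a) :=
    hEF.val_eq_of_val_mul_eq hrow
      (by rw [← hab.2, val_mul_apply_self hrow fun _ _ => val_eq_of_cycleCoverMatrix_pos])
      (cycleCoverMatrix_pos_iff.2 hbl)
  rcases eq_or_ne l a with rfl | hla
  · exact .refl l
  have hlb : ReflTransGen (IndifEdgeOn v x S) l b := by
    rcases hbl with rfl | ⟨-, h⟩
    exacts [.refl, h]
  exact Or.inr ⟨⟨ha, hla.symm, hval.symm⟩, hlb.trans hba⟩

theorem EnvyFree.cycleNbhd_eq_of_cycle (hEF : EnvyFree v x) {k : ℕ} {cyc : Fin (k + 1) → Fin n}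
    (hcycS : ∀ t, cyc t ∈ S)
    (hcyc : ∀ t, IndifEdge v (cycleCoverMatrix (IndifEdgeOn v x S) * of x) (cyc t) (cyc (t + 1)))
    (t t' : Fin (k + 1)) :
    cycleNbhd (IndifEdgeOn v x S) (cyc t) = cycleNbhd (IndifEdgeOn v x S) (cyc t') := by
  have hR : ∀ t, IndifEdgeOn v x S (cyc t) (cyc (t + 1)) := fun t =>
    ⟨hcycS t, hEF.indifEdge_of_indifEdge_cycleCoverMatrix_mul (hcyc t)⟩
  exact apply_eq_of_cycle
    (fun t => hEF.cycleNbhd_subset (hcycS t) (hcyc t) (reflTransGen_of_cycle hR _ _)) t t'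

end Component

theorem EG_component_clique_acyclic_general (n m : ℕ) (v : Fin n → Fin m → ℝ)
    (e : Fin n → ℝ) (p : Fin m → ℝ) (x : Fin n → Fin m → ℝ)
    (hEG : EGSolution v e p x) (hEF : EnvyFree v x)
    (S : Set (Fin n)) (hS : IsWCC v x S)
    (hbudget : ∀ i ∈ S, ∀ j ∈ S, e i = e j) :
    ∃ x' : Fin n → Fin m → ℝ,
      (∀ i ∉ S, x' i = x i) ∧
      EGSolution v e p x' ∧
      EnvyFree v x' ∧
      (∀ i j, IndifEdge v x' i j → IndifEdge v x i j) ∧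
      ∃ c : Fin n → ℕ,
        CliqueAcyclicOn (IndifEdge v x') S c ∧
        (∀ i ∈ S, ∀ j ∈ S, c i = c j → x' i = x' j) := by
  set R := IndifEdgeOn v x S
  set M := cycleCoverMatrix R
  have hind : ∀ a l, 0 < M a l → val v a (x l) = val v a (x a) :=
    fun _ _ => val_eq_of_cycleCoverMatrix_pos
  have hbundle : ∀ i j, Encodable.encode (cycleNbhd R i) = Encodable.encode (cycleNbhd R j) →
      (M * of x) i = (M * of x) j := fun i j h => by
    have hrow : M i = M j := cycleCoverMatrix_row_eq (Encodable.encode_injective h)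
    funext k
    simp only [mul_apply, hrow]
  refine ⟨M * of x, fun i => cycleCoverMatrix_mul_apply_of_notMem,
    hEG.mul cycleCoverMatrix_mem_doublyStochastic hind
      fun i l k => hEG.div_eq_of_cycleCoverMatrix_pos hS hbudget,
    hEF.mul cycleCoverMatrix_mem_rowStochastic hind,
    fun i j => hEF.indifEdge_of_indifEdge_cycleCoverMatrix_mul,
    fun a => Encodable.encode (cycleNbhd R a), ⟨?_, ?_⟩, fun i _ j _ => hbundle i j⟩
  · exact fun i _ j _ hij hc => ⟨hij, by rw [hbundle i j hc]⟩
  · exact fun k cyc hcycS hcyc t t' =>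
      congrArg Encodable.encode (hEF.cycleNbhd_eq_of_cycle hcycS hcyc t t')

/-- Lemma 4.4: given an envy-free Eisenberg–Gale solution `(x, p)` with budgets `e` and
a weakly connected component `S` of `I(x)` on which all budgets are equal, there is a
new allocation `x'`, agreeing with `x` outside `S`, such that `(x', p)` still solves
the Eisenberg–Gale program with budgets `e`, `x'` is envy-free, no new indifference
edges are created, the restriction of `I(x')` to `S` is clique acyclic, and agents of
`S` in the same clique of the witnessing partition have identical bundles. -/
theorem EG_component_clique_acyclic (n m : ℕ) (v : Fin n → Fin m → ℝ)
    (hv : ∀ i k, 0 ≤ v i k)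
    (e : Fin n → ℝ) (p : Fin m → ℝ) (x : Fin n → Fin m → ℝ)
    (hEG : EGSolution v e p x) (hEF : EnvyFree v x)
    (S : Set (Fin n)) (hS : IsWCC v x S)
    (hbudget : ∀ i ∈ S, ∀ j ∈ S, e i = e j) :
    ∃ x' : Fin n → Fin m → ℝ,
      (∀ i ∉ S, x' i = x i) ∧
      EGSolution v e p x' ∧
      EnvyFree v x' ∧
      (∀ i j, IndifEdge v x' i j → IndifEdge v x i j) ∧
      ∃ c : Fin n → ℕ,
        CliqueAcyclicOn (IndifEdge v x') S c ∧
        (∀ i ∈ S, ∀ j ∈ S, c i = c j → x' i = x' j) :=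
  EG_component_clique_acyclic_general n m v e p x hEG hEF S hS hbudget
end

section
/- Let (x, p) be a solution to the Eisenberg–Gale program with budgets e such that x is envy-free, and let S be a weakly connected component of I(x) on which all budgets are equal, such that the restriction of I(x) to S is clique acyclic with a witnessing partition into cliques in which any two agents of the same clique have identical bundles, and such that I(x) restricted to S has at least one edge between distinct cliques of this partition. Then there exist positive budgets e' with e'_i = e_i for all i ∉ S and a fractional allocation x' with x'_i = x_i for all i ∉ S such that: (x', p) is a solution to the Eisenberg–Gale program with budgets e'; x' is envy-free; every edge of I(x') is an edge of I(x), and I(x') has strictly fewer edges than I(x); and the restriction of I(x') to S has at least two weakly connected components, on each of which the budgets e' are constant. -/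
/-!
Pick an edge `a → b` of `I(x)` inside `S` between two cliques. By clique acyclicity `b` does
not reach `a`, so the set `U` of agents reaching `a` and the set `D` of agents reachable from `b`
are disjoint. Routing one unit along indifference edges from every `u ∈ U` through `a → b` to
every `w ∈ D` gives a flow `F` whose net outflow `d` is `|D|` on `U`, `-|U|` on `D` and `0`
elsewhere; it does not increase along edges of `I(x)`.

Let every agent `i` take the share `ε F i u` of the bundle of each `u` it is indifferent to,
give up the corresponding shares of its own bundle, and scale its budget by `1 + ε d i`. Its
utility scales by the same factor as its budget, and because budgets are equal on `S` the items
it takes are maximum bang-per-buck items for it, so the KKT conditions hold at the old prices.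
For small `ε` strict preferences stay strict, while an indifference survives only between
agents of equal `d`: the edge `a → b` disappears and the new budgets are constant on the new
components.
-/

open Finset

/-- One step in the underlying undirected graph of `I(X)` restricted to `S`. -/
def RestrStep {n m : ℕ} (v : Fin n → Fin m → ℝ) (X : Fin n → Fin m → ℝ)
    (S : Set (Fin n)) (i j : Fin n) : Prop :=
  i ∈ S ∧ j ∈ S ∧ (IndifEdge v X i j ∨ IndifEdge v X j i)

open Relation Filter Topology

lemma Relation.ReflTransGen.apply_eq_of_step {α β : Type*} {r : α → α → Prop} {f : α → β}
    (hf : ∀ a b, r a b → f a = f b) {a b : α} (h : ReflTransGen r a b) : f a = f b := by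
  simpa [reflTransGen_eq_self] using h.lift f hf

lemma card_subtype_lt_of_imp {α : Type*} [Finite α] {P Q : α → Prop} (hPQ : ∀ a, P a → Q a)
    {a : α} (hQ : Q a) (hP : ¬ P a) : Nat.card {a // P a} < Nat.card {a // Q a} :=
  Set.ncard_lt_ncard (s := {a | P a}) (t := {a | Q a})
    ((Set.ssubset_iff_of_subset hPQ).mpr ⟨a, hQ, hP⟩)

def InducedRel {α : Type*} (E : α → α → Prop) (S : Set α) (a b : α) : Prop :=
  a ∈ S ∧ b ∈ S ∧ E a b

section Flow

variable {α : Type*}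

def IsFlowOn (E : α → α → Prop) (F : α → α → ℝ) : Prop :=
  (∀ a b, 0 ≤ F a b) ∧ ∀ a b, F a b ≠ 0 → E a b

lemma isFlowOn_zero (E : α → α → Prop) : IsFlowOn E 0 :=
  ⟨fun _ _ => le_rfl, fun _ _ h => absurd rfl h⟩

lemma IsFlowOn.add {E : α → α → Prop} {F G : α → α → ℝ} (hF : IsFlowOn E F)
    (hG : IsFlowOn E G) : IsFlowOn E (F + G) := by
  refine ⟨fun a b => add_nonneg (hF.1 a b) (hG.1 a b), fun a b h => ?_⟩
  obtain hFab | hFab := eq_or_ne (F a b) 0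
  · exact hG.2 a b (by simpa [hFab] using h)
  · exact hF.2 a b hFab

lemma IsFlowOn.eq_zero_of_notMem_left {E : α → α → Prop} {S : Set α} {F : α → α → ℝ}
    (hF : IsFlowOn (InducedRel E S) F) {a : α} (ha : a ∉ S) (b : α) : F a b = 0 := by
  by_contra h
  exact ha (hF.2 a b h).1

lemma IsFlowOn.eq_zero_of_notMem_right {E : α → α → Prop} {S : Set α} {F : α → α → ℝ}
    (hF : IsFlowOn (InducedRel E S) F) {a : α} (ha : a ∉ S) (b : α) : F b a = 0 := by
  by_contra h
  exact ha (hF.2 b a h).2.1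

lemma sum_product_single_sub_single_apply [DecidableEq α] (U D : Finset α) (c : α) :
    (∑ q ∈ U ×ˢ D, (Pi.single q.1 1 - Pi.single q.2 1 : α → ℝ)) c =
      #D * (if c ∈ U then 1 else 0) - #U * (if c ∈ D then 1 else 0) := by
  rw [Finset.sum_apply, sum_product]
  simp only [Pi.sub_apply, Pi.single_apply, sum_sub_distrib, sum_const, nsmul_eq_mul, mul_ite,
    mul_one, mul_zero]
  simp [sum_ite_eq]

variable [Fintype α]

def excess (F : α → α → ℝ) (a : α) : ℝ := ∑ b, F a b - ∑ b, F b a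

lemma excess_add (F G : α → α → ℝ) : excess (F + G) = excess F + excess G := by
  ext a
  simp only [excess, Pi.add_apply, sum_add_distrib]
  ring

lemma IsFlowOn.excess_eq_zero_of_notMem {E : α → α → Prop} {S : Set α} {F : α → α → ℝ}
    (hF : IsFlowOn (InducedRel E S) F) {a : α} (ha : a ∉ S) : excess F a = 0 := by
  simp [excess, hF.eq_zero_of_notMem_left ha, hF.eq_zero_of_notMem_right ha]

variable [DecidableEq α] {E : α → α → Prop}

lemma exists_isFlowOn_excess_of_reflTransGen {i j : α} (h : ReflTransGen E i j) :
    ∃ F, IsFlowOn E F ∧ excess F = Pi.single i 1 - Pi.single j 1 := by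
  induction h with
  | refl => exact ⟨0, isFlowOn_zero E, by ext; simp [excess]⟩
  | @tail b c _ hbc ih =>
    obtain ⟨F, hF, hex⟩ := ih
    let G : α → α → ℝ := fun a a' => if a = b ∧ a' = c then 1 else 0
    have hG : IsFlowOn E G := by
      refine ⟨fun a a' => by positivity, fun a a' h => ?_⟩
      obtain ⟨rfl, rfl⟩ := (ite_ne_right_iff.mp h).1
      exact hbc
    refine ⟨F + G, hF.add hG, ?_⟩
    rw [excess_add, hex]
    ext a
    simp [G, excess, Pi.single_apply, ite_and]

lemma exists_isFlowOn_excess_sum (P : Finset (α × α)) (hP : ∀ q ∈ P, ReflTransGen E q.1 q.2) :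
    ∃ F, IsFlowOn E F ∧ excess F = ∑ q ∈ P, (Pi.single q.1 1 - Pi.single q.2 1) := by
  induction P using Finset.induction_on with
  | empty => exact ⟨0, isFlowOn_zero E, by ext; simp [excess]⟩
  | insert q P hq ih =>
    obtain ⟨F, hF, hex⟩ := ih fun q' hq' => hP q' (mem_insert_of_mem hq')
    obtain ⟨G, hG, hexG⟩ := exists_isFlowOn_excess_of_reflTransGen (hP q (mem_insert_self q P))
    exact ⟨G + F, hG.add hF, by rw [excess_add, hex, hexG, sum_insert hq]⟩

theorem exists_isFlowOn_excess_antitone {a b : α} (hab : E a b) (hba : ¬ ReflTransGen E b a) :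
    ∃ F, IsFlowOn E F ∧ (∀ c d, E c d → excess F d ≤ excess F c) ∧ excess F b < excess F a := by
  classical
  set U := univ.filter (ReflTransGen E · a)
  set D := univ.filter (ReflTransGen E b ·)
  obtain ⟨F, hF, hex⟩ := exists_isFlowOn_excess_sum (U ×ˢ D) fun q hq => by
    simp only [U, D, mem_product, mem_filter, mem_univ, true_and] at hq
    exact (hq.1.tail hab).trans hq.2
  have hexc (c : α) : excess F c =
      #D * (if c ∈ U then 1 else 0) - #U * (if c ∈ D then 1 else 0) := by
    rw [hex, sum_product_single_sub_single_apply]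
  have haU : a ∈ U := mem_filter.mpr ⟨mem_univ a, .refl⟩
  have hbD : b ∈ D := mem_filter.mpr ⟨mem_univ b, .refl⟩
  refine ⟨F, hF, fun c d hcd => ?_, ?_⟩
  · have hU : d ∈ U → c ∈ U := by simpa [U] using ReflTransGen.head hcd
    have hD : c ∈ D → d ∈ D := by simpa [D] using fun h => ReflTransGen.tail h hcd
    have : (0 : ℝ) ≤ #U := by positivity
    have : (0 : ℝ) ≤ #D := by positivity
    rw [hexc, hexc]
    split_ifs <;> first | linarith | tauto
  · have hbU : b ∉ U := by simpa [U] using hba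
    have haD : a ∉ D := by simpa [D] using hba
    rw [hexc, hexc, if_pos haU, if_neg haD, if_neg hbU, if_pos hbD]
    have : (0 : ℝ) < #D := by exact_mod_cast card_pos.mpr ⟨b, hbD⟩
    have : (0 : ℝ) < #U := by exact_mod_cast card_pos.mpr ⟨a, haU⟩
    linarith

end Flow

lemma exists_fin_path_of_reflTransGen {α : Type*} {r : α → α → Prop} {a b : α}
    (h : ReflTransGen r a b) : ∃ (k : ℕ) (f : Fin (k + 1) → α),
      f 0 = a ∧ f (Fin.last k) = b ∧ ∀ t : Fin k, r (f t.castSucc) (f t.succ) := by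
  induction h using ReflTransGen.head_induction_on with
  | refl => exact ⟨0, fun _ => b, rfl, rfl, fun t => t.elim0⟩
  | head hac _ ih =>
    obtain ⟨k, f, hf0, hfk, hf⟩ := ih
    refine ⟨k + 1, Fin.cons _ f, rfl, by simpa using hfk, fun t => ?_⟩
    cases t using Fin.cases with
    | zero => simpa [hf0] using hac
    | succ s => simpa [← Fin.succ_castSucc] using hf s

lemma CliqueAcyclicOn.label_eq_of_reflTransGen {n : ℕ} {E : Fin n → Fin n → Prop}
    {S : Set (Fin n)} {c : Fin n → ℕ} (hca : CliqueAcyclicOn E S c) {a b : Fin n}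
    (hab : ReflTransGen (InducedRel E S) a b) (hba : InducedRel E S b a) : c a = c b := by
  obtain ⟨k, f, hf0, hfk, hf⟩ := exists_fin_path_of_reflTransGen hab
  have hcyc (t : Fin (k + 1)) : InducedRel E S (f t) (f (t + 1)) := by
    cases t using Fin.lastCases with
    | last => simpa [hf0, hfk] using hba
    | cast s => simpa [Fin.coeSucc_eq_succ] using hf s
  simpa [hf0, hfk] using
    hca.2 k f (fun t => (hcyc t).1) (fun t => (hcyc t).2.2) 0 (Fin.last k)

lemma IsWCC.mem_iff {n m : ℕ} {v : Fin n → Fin m → ℝ} {X : Fin n → Fin m → ℝ}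
    {S : Set (Fin n)} (hS : IsWCC v X S) {i j : Fin n} (h : UndirStep v X i j) :
    i ∈ S ↔ j ∈ S := by
  obtain ⟨i₀, rfl⟩ := hS
  exact ⟨fun hi => hi.tail h, fun hj => hj.tail h.symm⟩

lemma IsWCC.excess_antitone {n m : ℕ} {v : Fin n → Fin m → ℝ} {X : Fin n → Fin m → ℝ}
    {S : Set (Fin n)} (hS : IsWCC v X S) {F : Fin n → Fin n → ℝ}
    (hF : IsFlowOn (InducedRel (IndifEdge v X) S) F)
    (hmono : ∀ i j, InducedRel (IndifEdge v X) S i j → excess F j ≤ excess F i) (i j : Fin n)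
    (hij : IndifEdge v X i j) : excess F j ≤ excess F i := by
  by_cases hi : i ∈ S
  · exact hmono i j ⟨hi, (hS.mem_iff (Or.inl hij)).mp hi, hij⟩
  · rw [hF.excess_eq_zero_of_notMem hi,
      hF.excess_eq_zero_of_notMem ((hS.mem_iff (Or.inl hij)).not.mp hi)]

section Transfer

variable {n m : ℕ}

def transfer (F : Fin n → Fin n → ℝ) (x : Fin n → Fin m → ℝ) (ε : ℝ) (i : Fin n)
    (j : Fin m) : ℝ :=
  x i j + ε * (∑ u, F i u * x u j - (∑ u, F u i) * x i j)

lemma sum_transfer (F : Fin n → Fin n → ℝ) (x : Fin n → Fin m → ℝ) (ε : ℝ) (j : Fin m) :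
    ∑ i, transfer F x ε i j = ∑ i, x i j := by
  simp only [transfer, sum_add_distrib, ← mul_sum, sum_sub_distrib, sum_mul]
  rw [sum_comm (γ := Fin n)]
  simp

lemma transfer_nonneg {F : Fin n → Fin n → ℝ} {x : Fin n → Fin m → ℝ} {ε : ℝ}
    (hF : ∀ a b, 0 ≤ F a b) (hx : ∀ i j, 0 ≤ x i j) (hε : 0 ≤ ε) {i : Fin n}
    (hin : ε * ∑ u, F u i ≤ 1) (j : Fin m) : 0 ≤ transfer F x ε i j := by
  have : 0 ≤ ε * ∑ u, F i u * x u j :=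
    mul_nonneg hε (sum_nonneg fun u _ => mul_nonneg (hF i u) (hx u j))
  have : 0 ≤ x i j * (1 - ε * ∑ u, F u i) := mul_nonneg (hx i j) (by linarith)
  unfold transfer
  linarith

lemma transfer_eq_self {F : Fin n → Fin n → ℝ} (x : Fin n → Fin m → ℝ) (ε : ℝ) {i : Fin n}
    (hrow : ∀ u, F i u = 0) (hcol : ∀ u, F u i = 0) : transfer F x ε i = x i := by
  ext j
  simp [transfer, hrow, hcol]

lemma val_transfer (v : Fin n → Fin m → ℝ) (F : Fin n → Fin n → ℝ) (x : Fin n → Fin m → ℝ)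
    (ε : ℝ) (i j : Fin n) : val v i (transfer F x ε j) =
      val v i (x j) + ε * (∑ u, F j u * val v i (x u) - (∑ u, F u j) * val v i (x j)) := by
  simp only [_root_.val, transfer, mul_add, mul_sub, sum_add_distrib, sum_sub_distrib, mul_sum]
  congr 2
  · rw [sum_comm]
    exact sum_congr rfl fun _ _ => sum_congr rfl fun _ _ => by ring
  · exact sum_congr rfl fun _ _ => by ring

lemma val_transfer_self {v : Fin n → Fin m → ℝ} {F : Fin n → Fin n → ℝ}
    {x : Fin n → Fin m → ℝ} (ε : ℝ) {i : Fin n}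
    (hF : ∀ u, F i u ≠ 0 → val v i (x u) = val v i (x i)) :
    val v i (transfer F x ε i) = val v i (x i) * (1 + ε * excess F i) := by
  have hout : ∑ u, F i u * val v i (x u) = (∑ u, F i u) * val v i (x i) := by
    rw [sum_mul]
    refine sum_congr rfl fun u _ => ?_
    obtain hu | hu := eq_or_ne (F i u) 0
    · simp [hu]
    · rw [hF u hu]
  rw [val_transfer, hout, excess]
  ring

lemma val_transfer_le {v : Fin n → Fin m → ℝ} {F : Fin n → Fin n → ℝ}
    {x : Fin n → Fin m → ℝ} {ε : ℝ} (hEF : EnvyFree v x) (hF : ∀ a b, 0 ≤ F a b)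
    (hε : 0 ≤ ε) {j : Fin n} (hin : ε * ∑ u, F u j ≤ 1) (i : Fin n) :
    val v i (transfer F x ε j) ≤ val v i (x i) * (1 + ε * excess F j) := by
  have hout : ∑ u, F j u * val v i (x u) ≤ (∑ u, F j u) * val v i (x i) := by
    rw [sum_mul]
    exact sum_le_sum fun u _ => mul_le_mul_of_nonneg_left (hEF i u) (hF j u)
  have hown : val v i (x j) * (1 - ε * ∑ u, F u j) ≤ val v i (x i) * (1 - ε * ∑ u, F u j) :=
    mul_le_mul_of_nonneg_right (hEF i j) (by linarith)
  rw [val_transfer, excess]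
  linear_combination hown + mul_le_mul_of_nonneg_left hout hε

lemma exists_of_transfer_pos {F : Fin n → Fin n → ℝ} {x : Fin n → Fin m → ℝ} {ε : ℝ}
    (hF : ∀ a b, 0 ≤ F a b) (hx : ∀ i j, 0 ≤ x i j) (hε : 0 ≤ ε) {i : Fin n} {j : Fin m}
    (h : 0 < transfer F x ε i j) : 0 < x i j ∨ ∃ u, F i u ≠ 0 ∧ 0 < x u j := by
  by_contra! hno
  obtain ⟨hxij, hu⟩ := hno
  have hxij : x i j = 0 := le_antisymm hxij (hx i j)
  have hin : ∑ u, F i u * x u j ≤ 0 := sum_nonpos fun u _ => by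
    obtain hFu | hFu := eq_or_ne (F i u) 0
    · simp [hFu]
    · exact mul_nonpos_of_nonneg_of_nonpos (hF i u) (hu u hFu)
  have := mul_nonpos_of_nonneg_of_nonpos hε hin
  simp only [transfer, hxij, mul_zero, sub_zero, zero_add] at h
  linarith

lemma eventually_pos_add_mul {a : ℝ} (ha : 0 < a) (b : ℝ) :
    ∀ᶠ ε in 𝓝 0, 0 < a + ε * b := by
  have : Tendsto (fun ε : ℝ => a + ε * b) (𝓝 0) (𝓝 a) := by
    simpa using ((tendsto_id (x := 𝓝 (0 : ℝ))).mul_const b).const_add a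
  exact this.eventually_const_lt ha

lemma exists_pos_transfer_preserves_strict (v : Fin n → Fin m → ℝ) (F : Fin n → Fin n → ℝ)
    (x : Fin n → Fin m → ℝ) : ∃ ε > 0, (∀ i, ε * ∑ u, F u i ≤ 1) ∧
      (∀ i, 0 < 1 + ε * excess F i) ∧
      ∀ i j, val v i (x j) < val v i (x i) →
        val v i (transfer F x ε j) < val v i (transfer F x ε i) := by
  have hin (i : Fin n) : ∀ᶠ ε in 𝓝 0, ε * ∑ u, F u i ≤ 1 :=
    (eventually_pos_add_mul one_pos (-∑ u, F u i)).mono fun ε h => by linarith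
  have hpos (i : Fin n) := eventually_pos_add_mul one_pos (excess F i)
  have hstrict (i j : Fin n) : ∀ᶠ ε in 𝓝 0, val v i (x j) < val v i (x i) →
      val v i (transfer F x ε j) < val v i (transfer F x ε i) := by
    by_cases hij : val v i (x j) < val v i (x i)
    · set D : Fin n → ℝ := fun k => ∑ u, F k u * val v i (x u) - (∑ u, F u k) * val v i (x k)
      have hD (ε : ℝ) (k : Fin n) : val v i (transfer F x ε k) = val v i (x k) + ε * D k :=
        val_transfer v F x ε i k
      refine (eventually_pos_add_mul (sub_pos.mpr hij) (D i - D j)).mono fun ε h _ => ?_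
      rw [hD, hD]
      linear_combination h
    · exact Eventually.of_forall fun _ h => absurd h hij
  have hall := (eventually_all.mpr hin).and
    ((eventually_all.mpr hpos).and (eventually_all.mpr fun i => eventually_all.mpr (hstrict i)))
  obtain ⟨ε, ⟨hεin, hεpos, hεstrict⟩, hε⟩ :=
    ((hall.filter_mono nhdsWithin_le_nhds).and (self_mem_nhdsWithin (s := Set.Ioi 0))).exists
  exact ⟨ε, hε, hεin, hεpos, hεstrict⟩

end Transfer

namespace EGSolution

variable {n m : ℕ} {v : Fin n → Fin m → ℝ} {e : Fin n → ℝ} {p : Fin m → ℝ}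
  {x : Fin n → Fin m → ℝ}

lemma sum_price_mul_eq_budget (h : EGSolution v e p x) (u : Fin n) :
    ∑ j, p j * x u j = e u := by
  obtain ⟨he, hp, ⟨hx, -⟩, hV, -, -, hK⟩ := h
  have hterm (j : Fin m) : v u j * x u j = val v u (x u) / e u * (p j * x u j) := by
    obtain h0 | hpos := (hx u j).1.eq_or_lt
    · simp [← h0]
    · rw [← hK u j hpos]
      field_simp [(hp j).ne']
  have hval : val v u (x u) = val v u (x u) / e u * ∑ j, p j * x u j := by
    rw [mul_sum]
    exact sum_congr rfl fun j _ => hterm j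
  field_simp [(hV u).ne', (he u).ne'] at hval
  linarith

lemma mbb_eq_of_indifferent (h : EGSolution v e p x) {i u : Fin n}
    (hval : val v i (x u) = val v i (x i)) (hbudget : e u = e i) {j : Fin m}
    (hj : 0 < x u j) : v i j / p j = val v i (x i) / e i := by
  have hspend := h.sum_price_mul_eq_budget u
  obtain ⟨he, hp, ⟨hx, -⟩, -, -, hK, -⟩ := h
  set r := val v i (x i) / e i
  have hterm (k : Fin m) : 0 ≤ (r * p k - v i k) * x u k :=
    mul_nonneg (sub_nonneg.mpr ((div_le_iff₀ (hp k)).mp (hK i k))) (hx u k).1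
  have hsum : ∑ k, (r * p k - v i k) * x u k = 0 := by
    calc ∑ k, (r * p k - v i k) * x u k = r * ∑ k, p k * x u k - val v i (x u) := by
          simp only [_root_.val, sub_mul, sum_sub_distrib, mul_sum, mul_assoc]
      _ = 0 := by
          rw [hspend, hbudget, hval, div_mul_cancel₀ _ (he i).ne', sub_self]
  have hzero := (sum_eq_zero_iff_of_nonneg fun k _ => hterm k).mp hsum j (mem_univ j)
  rw [div_eq_iff (hp j).ne', eq_comm, ← sub_eq_zero]
  exact (mul_eq_zero.mp hzero).resolve_right hj.ne'

lemma transfer_scaled (h : EGSolution v e p x) {F : Fin n → Fin n → ℝ}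
    (hF0 : ∀ a b, 0 ≤ F a b)
    (hF : ∀ i u, F i u ≠ 0 → val v i (x u) = val v i (x i) ∧ e u = e i) {ε : ℝ} (hε : 0 ≤ ε)
    (hin : ∀ i, ε * ∑ u, F u i ≤ 1) (hpos : ∀ i, 0 < 1 + ε * excess F i) :
    EGSolution v (fun i => e i * (1 + ε * excess F i)) p (transfer F x ε) := by
  have hmbb {i u : Fin n} (hu : F i u ≠ 0) {j : Fin m} (hj : 0 < x u j) :=
    h.mbb_eq_of_indifferent (hF i u hu).1 (hF i u hu).2 hj
  obtain ⟨he, hp, ⟨hx, hcol⟩, hV, -, hK1, hK2⟩ := h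
  have hself (i : Fin n) := val_transfer_self (v := v) (x := x) ε fun u hu => (hF i u hu).1
  have hratio (i : Fin n) : val v i (transfer F x ε i) / (e i * (1 + ε * excess F i)) =
      val v i (x i) / e i := by
    rw [hself, mul_div_mul_right _ _ (hpos i).ne']
  have hcol' (j : Fin m) : ∑ i, transfer F x ε i j = 1 := (sum_transfer F x ε j).trans (hcol j)
  have hnonneg (i : Fin n) (j : Fin m) : 0 ≤ transfer F x ε i j :=
    transfer_nonneg hF0 (fun i j => (hx i j).1) hε (hin i) j
  refine ⟨fun i => mul_pos (he i) (hpos i), hp, ⟨fun i j => ⟨hnonneg i j, ?_⟩, hcol'⟩,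
    fun i => by rw [hself]; exact mul_pos (hV i) (hpos i), hcol',
    fun i j => by rw [hratio]; exact hK1 i j, fun i j hij => ?_⟩
  · exact (single_le_sum (fun i' _ => hnonneg i' j) (mem_univ i)).trans_eq (hcol' j)
  · rw [hratio]
    obtain hxij | ⟨u, hFu, hxuj⟩ := exists_of_transfer_pos hF0 (fun i j => (hx i j).1) hε hij
    · exact hK2 i j hxij
    · exact hmbb hFu hxuj

theorem exists_transfer (h : EGSolution v e p x) (hEF : EnvyFree v x)
    {F : Fin n → Fin n → ℝ} (hF0 : ∀ a b, 0 ≤ F a b)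
    (hF : ∀ i u, F i u ≠ 0 → val v i (x u) = val v i (x i) ∧ e u = e i)
    (hmono : ∀ i j, IndifEdge v x i j → excess F j ≤ excess F i) :
    ∃ ε > 0, EGSolution v (fun i => e i * (1 + ε * excess F i)) p (transfer F x ε) ∧
      EnvyFree v (transfer F x ε) ∧
      ∀ i j, IndifEdge v (transfer F x ε) i j → IndifEdge v x i j ∧ excess F i = excess F j := by
  obtain ⟨ε, hε, hin, hpos, hstrict⟩ := exists_pos_transfer_preserves_strict v F x
  have hV := h.2.2.2.1
  have hself (i : Fin n) := val_transfer_self (v := v) (x := x) ε fun u hu => (hF i u hu).1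
  have hle (i j : Fin n) := val_transfer_le hEF hF0 hε.le (hin j) i
  refine ⟨ε, hε, h.transfer_scaled hF0 hF hε.le hin hpos, fun i j => ?_, fun i j hij => ?_⟩
  · obtain hlt | heq := (hEF i j).lt_or_eq
    · exact (hstrict i j hlt).le
    have hexc : excess F j ≤ excess F i := by
      obtain rfl | hne := eq_or_ne i j
      · rfl
      · exact hmono i j ⟨hne, heq.symm⟩
    calc val v i (transfer F x ε j) ≤ val v i (x i) * (1 + ε * excess F j) := hle i j
      _ ≤ val v i (x i) * (1 + ε * excess F i) := by gcongr; exact (hV i).le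
      _ = val v i (transfer F x ε i) := (hself i).symm
  · have hold : IndifEdge v x i j :=
      ⟨hij.1, ((hEF i j).eq_or_lt.resolve_right fun hlt => (hstrict i j hlt).ne' hij.2).symm⟩
    refine ⟨hold, le_antisymm ?_ (hmono i j hold)⟩
    have hscaled : val v i (x i) * (1 + ε * excess F i) ≤ val v i (x i) * (1 + ε * excess F j) :=
      (hself i).symm.trans_le (hij.2.trans_le (hle i j))
    have := le_of_mul_le_mul_left hscaled (hV i)
    exact le_of_mul_le_mul_left (by linarith) hε

end EGSolution

theorem EG_budget_change_splits_component_general (n m : ℕ) (v : Fin n → Fin m → ℝ)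
    (e : Fin n → ℝ) (p : Fin m → ℝ) (x : Fin n → Fin m → ℝ)
    (hEG : EGSolution v e p x) (hEF : EnvyFree v x)
    (S : Set (Fin n)) (hS : IsWCC v x S)
    (hbudget : ∀ i ∈ S, ∀ j ∈ S, e i = e j)
    (c : Fin n → ℕ)
    (hca : CliqueAcyclicOn (IndifEdge v x) S c)
    (hedge : ∃ i ∈ S, ∃ j ∈ S, IndifEdge v x i j ∧ c i ≠ c j) :
    ∃ (e' : Fin n → ℝ) (x' : Fin n → Fin m → ℝ),
      (∀ i, 0 < e' i) ∧
      (∀ i ∉ S, e' i = e i ∧ x' i = x i) ∧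
      EGSolution v e' p x' ∧
      EnvyFree v x' ∧
      (∀ i j, IndifEdge v x' i j → IndifEdge v x i j) ∧
      Nat.card {q : Fin n × Fin n // IndifEdge v x' q.1 q.2} <
        Nat.card {q : Fin n × Fin n // IndifEdge v x q.1 q.2} ∧
      (∃ i ∈ S, ∃ j ∈ S, ¬ Relation.ReflTransGen (RestrStep v x' S) i j) ∧
      (∀ i ∈ S, ∀ j : Fin n, Relation.ReflTransGen (RestrStep v x' S) i j →
        e' i = e' j) := by
  classical
  obtain ⟨a, ha, b, hb, hab, hcab⟩ := hedge
  have hba : ¬ ReflTransGen (InducedRel (IndifEdge v x) S) b a := fun h =>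
    hcab (hca.label_eq_of_reflTransGen h ⟨ha, hb, hab⟩).symm
  obtain ⟨F, hF, hmono, hlt⟩ := exists_isFlowOn_excess_antitone ⟨ha, hb, hab⟩ hba
  have hFindif (i u : Fin n) (hu : F i u ≠ 0) : val v i (x u) = val v i (x i) ∧ e u = e i :=
    have ⟨hiS, huS, hiu⟩ := hF.2 i u hu
    ⟨hiu.2.symm, hbudget u huS i hiS⟩
  obtain ⟨ε, -, hEG', hEF', hedges⟩ := hEG.exists_transfer hEF hF.1 hFindif
    (hS.excess_antitone hF hmono)
  have hstep (i j : Fin n) (h : RestrStep v (transfer F x ε) S i j) :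
      e i = e j ∧ excess F i = excess F j := by
    obtain ⟨hi, hj, hij | hji⟩ := h
    · exact ⟨hbudget i hi j hj, (hedges i j hij).2⟩
    · exact ⟨hbudget i hi j hj, (hedges j i hji).2.symm⟩
  refine ⟨_, transfer F x ε, hEG'.1, fun i hi => ⟨by simp [hF.excess_eq_zero_of_notMem hi],
    transfer_eq_self x ε (hF.eq_zero_of_notMem_left hi) (hF.eq_zero_of_notMem_right hi)⟩,
    hEG', hEF', fun i j h => (hedges i j h).1,
    card_subtype_lt_of_imp (fun q h => (hedges q.1 q.2 h).1) (a := (a, b)) hab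
      fun h => hlt.ne' (hedges a b h).2,
    ⟨a, ha, b, hb, fun h => hlt.ne' (h.apply_eq_of_step fun i j hij => (hstep i j hij).2)⟩,
    fun i _ j h => h.apply_eq_of_step (f := fun i => e i * (1 + ε * excess F i))
      fun i j hij => by rw [(hstep i j hij).1, (hstep i j hij).2]⟩

/-- Lemma 4.5: given an envy-free Eisenberg–Gale solution `(x, p)` with budgets `e` and
a weakly connected component `S` of `I(x)` on which all budgets are equal, whose
restriction to `S` is clique acyclic with identical bundles inside cliques and with at
least one edge between distinct cliques, there are new budgets `e'` and a new
allocation `x'`, agreeing with `e` and `x` outside `S`, such that `(x', p)` solves the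
Eisenberg–Gale program with budgets `e'`, `x'` is envy-free, no new indifference edges
are created, `I(x')` has strictly fewer edges than `I(x)`, and the restriction of
`I(x')` to `S` has at least two weakly connected components, on each of which the
budgets `e'` are constant. -/
theorem EG_budget_change_splits_component (n m : ℕ) (v : Fin n → Fin m → ℝ)
    (hv : ∀ i k, 0 ≤ v i k)
    (e : Fin n → ℝ) (p : Fin m → ℝ) (x : Fin n → Fin m → ℝ)
    (hEG : EGSolution v e p x) (hEF : EnvyFree v x)
    (S : Set (Fin n)) (hS : IsWCC v x S)
    (hbudget : ∀ i ∈ S, ∀ j ∈ S, e i = e j)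
    (c : Fin n → ℕ)
    (hca : CliqueAcyclicOn (IndifEdge v x) S c)
    (hsame : ∀ i ∈ S, ∀ j ∈ S, c i = c j → x i = x j)
    (hedge : ∃ i ∈ S, ∃ j ∈ S, IndifEdge v x i j ∧ c i ≠ c j) :
    ∃ (e' : Fin n → ℝ) (x' : Fin n → Fin m → ℝ),
      (∀ i, 0 < e' i) ∧
      (∀ i ∉ S, e' i = e i ∧ x' i = x i) ∧
      EGSolution v e' p x' ∧
      EnvyFree v x' ∧
      (∀ i j, IndifEdge v x' i j → IndifEdge v x i j) ∧
      Nat.card {q : Fin n × Fin n // IndifEdge v x' q.1 q.2} <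
        Nat.card {q : Fin n × Fin n // IndifEdge v x q.1 q.2} ∧
      (∃ i ∈ S, ∃ j ∈ S, ¬ Relation.ReflTransGen (RestrStep v x' S) i j) ∧
      (∀ i ∈ S, ∀ j : Fin n, Relation.ReflTransGen (RestrStep v x' S) i j →
        e' i = e' j) :=
  EG_budget_change_splits_component_general n m v e p x hEG hEF S hS hbudget c hca hedge
end

section
/- If c > 0, then 0 < p < 1 and E[max(X_1, …, X_n)] ≥ μ + (p − p^n)·c/2. -/
/-!
Put `Z = (X₀ - μ)⁻`. As `|X₀ - μ| ≤ 1`, `c = E (X₀ - μ)² ≤ E |X₀ - μ| = 2 E Z`, the last step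
because `X₀ - μ` is centred. Pointwise `max_i X_i ≥ X₀ + Z · 1_A`, where `A` is the event that one
of the other `m` variables is at least `μ`; `A` is independent of `X₀` and has probability
`1 - p^m`. Hence `E max ≥ μ + (1 - p^m) E Z ≥ μ + (1 - p^m) c / 2 ≥ μ + (p - p^(m+1)) c / 2`.
Finally `E Z > 0` forces `p > 0`, while `p < 1` holds for every integrable variable.
-/

open MeasureTheory ProbabilityTheory Finset

theorem MeasureTheory.Integrable.finset_sup' {α ι : Type*} [MeasurableSpace α] {μ : Measure α}
    {s : Finset ι} (hs : s.Nonempty) {f : ι → α → ℝ} (hf : ∀ i ∈ s, Integrable (f i) μ) :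
    Integrable (fun a => s.sup' hs fun i => f i a) μ :=
  (Finset.sup'_induction (p := (Integrable · μ)) hs f (fun _ hg _ hh => hg.sup hh) hf).congr
    (.of_forall fun a => Finset.sup'_apply hs f a)

theorem add_negPart_sub_eq_max {α : Type*} [AddCommGroup α] [LinearOrder α]
    [IsOrderedAddMonoid α] (a t : α) : a + (a - t)⁻ = max a t := by
  rcases le_total a t with h | h
  · rw [negPart_eq_neg.2 (sub_nonpos.2 h), max_eq_right h]
    abel
  · rw [negPart_eq_zero.2 (sub_nonneg.2 h), max_eq_left h, add_zero]

section

variable {Ω : Type*} [MeasurableSpace Ω] {P : Measure Ω}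

theorem measure_setOf_lt_pos_of_integral_negPart_sub_pos {X : Ω → ℝ} {t : ℝ}
    (h : 0 < ∫ ω, (X ω - t)⁻ ∂P) : 0 < P {ω | X ω < t} := by
  refine pos_of_ne_zero fun h0 => h.ne' (integral_eq_zero_of_ae ?_)
  filter_upwards [measure_eq_zero_iff_ae_notMem.1 h0] with ω hω
  simpa [sub_nonneg] using hω

variable [IsProbabilityMeasure P]

theorem measure_setOf_lt_integral_lt_one {X : Ω → ℝ} (hX : Integrable X P) :
    P {ω | X ω < P[X]} < 1 := by
  have hcompl : {ω | X ω < P[X]} = {ω | P[X] ≤ X ω}ᶜ := by ext; simp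
  rw [hcompl, prob_compl_eq_one_sub₀ (s := {ω | P[X] ≤ X ω})
    (hX.aemeasurable.nullMeasurable measurableSet_Ici)]
  exact ENNReal.sub_lt_self ENNReal.one_ne_top one_ne_zero (measure_integral_le_pos hX).ne'

theorem abs_sub_integral_le_one_of_mem_Icc {X : Ω → ℝ} (hX : ∀ ω, X ω ∈ Set.Icc (0 : ℝ) 1)
    (ω : Ω) : |X ω - P[X]| ≤ 1 := by
  have hmean_nonneg : 0 ≤ P[X] := integral_nonneg fun ω => (hX ω).1
  have hmean_le_one : P[X] ≤ 1 :=
    (integral_mono_of_nonneg (.of_forall fun ω => (hX ω).1) (integrable_const 1)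
      (.of_forall fun ω => (hX ω).2)).trans_eq (by simp)
  obtain ⟨hX_nonneg, hX_le_one⟩ := hX ω
  rw [abs_le]
  constructor <;> linarith

theorem integral_abs_sub_integral_eq_two_mul_integral_negPart {X : Ω → ℝ} (hX : Integrable X P) :
    ∫ ω, |X ω - P[X]| ∂P = 2 * ∫ ω, (X ω - P[X])⁻ ∂P := by
  have hdev : Integrable (fun ω => X ω - P[X]) P := hX.sub (integrable_const _)
  have hneg : Integrable (fun ω => (X ω - P[X])⁻) P := hdev.neg_part
  have hcentered : ∫ ω, (X ω - P[X]) ∂P = 0 := by simp [integral_sub hX (integrable_const _)]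
  calc ∫ ω, |X ω - P[X]| ∂P = ∫ ω, ((X ω - P[X]) + 2 * (X ω - P[X])⁻) ∂P := by
        congr with ω
        linarith [two_nsmul (X ω - P[X])⁻ ▸ abs_sub_eq_two_nsmul_negPart (X ω - P[X])]
    _ = 2 * ∫ ω, (X ω - P[X])⁻ ∂P := by
        rw [integral_add hdev (hneg.const_mul 2), hcentered, integral_const_mul, zero_add]

theorem variance_le_integral_abs_sub_integral {X : Ω → ℝ} (hX : Integrable X P)
    (hdev : ∀ᵐ ω ∂P, |X ω - P[X]| ≤ 1) :
    variance X P ≤ ∫ ω, |X ω - P[X]| ∂P := by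
  have habs : Integrable (fun ω => |X ω - P[X]|) P := (hX.sub (integrable_const _)).abs
  have hsq_le : ∀ᵐ ω ∂P, (X ω - P[X]) ^ 2 ≤ |X ω - P[X]| := hdev.mono fun ω h => by
    rw [← sq_abs]
    nlinarith [abs_nonneg (X ω - P[X])]
  rw [variance_eq_integral hX.aemeasurable]
  refine integral_mono_ae (habs.mono' ?_ ?_) habs hsq_le
  · exact (hX.aestronglyMeasurable.sub aestronglyMeasurable_const).pow 2
  · filter_upwards [hsq_le] with ω h
    rwa [Real.norm_of_nonneg (sq_nonneg _)]

theorem ProbabilityTheory.iIndepFun.measureReal_exists_le {ι : Type*} {X : ι → Ω → ℝ}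
    (hindep : iIndepFun X P) (hmeas : ∀ i, Measurable (X i)) (T : Finset ι) (t : ℝ) :
    P.real {ω | ∃ i ∈ T, t ≤ X i ω} = 1 - ∏ i ∈ T, P.real {ω | X i ω < t} := by
  have hcompl : {ω | ∃ i ∈ T, t ≤ X i ω}ᶜ = ⋂ i ∈ T, {ω | X i ω < t} := by ext; simp
  rw [← compl_compl {ω | ∃ i ∈ T, t ≤ X i ω}, probReal_compl_eq_one_sub, hcompl, measureReal_def,
    hindep.meas_biInter (s := fun i => {ω | X i ω < t})
      fun i _ => ⟨Set.Iio t, measurableSet_Iio, rfl⟩,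
    ENNReal.toReal_prod]
  · rfl
  · rw [hcompl]
    exact T.measurableSet_biInter fun i _ => measurableSet_lt (hmeas i) measurable_const

theorem ProbabilityTheory.iIndepFun.integral_add_mul_integral_negPart_le_integral_sup'
    {ι : Type*} [Fintype ι] [DecidableEq ι] {X : ι → Ω → ℝ} (hindep : iIndepFun X P)
    (hmeas : ∀ i, Measurable (X i)) (hint : ∀ i, Integrable (X i) P) (i₀ : ι) (t : ℝ) :
    P[X i₀] + (1 - ∏ i ∈ {i₀}ᶜ, P.real {ω | X i ω < t}) * ∫ ω, (X i₀ ω - t)⁻ ∂P ≤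
      ∫ ω, univ.sup' ⟨i₀, mem_univ i₀⟩ (fun i => X i ω) ∂P := by
  set T : Finset ι := {i₀}ᶜ
  let Y : Ω → T → ℝ := fun ω i => X i ω
  let A : Set Ω := {ω | ∃ i ∈ T, t ≤ X i ω}
  have hY : Measurable Y := measurable_pi_lambda _ fun i => hmeas i
  have hA : MeasurableSet[MeasurableSpace.comap Y inferInstance] A := by
    refine ⟨{v | ∃ i, t ≤ v i}, ?_, by ext; simp [Y, A]⟩
    simp only [Set.ofPred_exists]
    exact .iUnion fun i => measurableSet_le measurable_const (measurable_pi_apply i)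
  have hindepA : Indep (MeasurableSpace.comap Y inferInstance)
      (MeasurableSpace.comap (X i₀) inferInstance) P := by
    rw [← IndepFun_iff_Indep]
    exact (hindep.indepFun_finset T {i₀} disjoint_compl_left hmeas).comp measurable_id
      (measurable_pi_apply ⟨i₀, mem_singleton_self i₀⟩)
  have hsetIntegral : ∫ ω in A, (X i₀ ω - t)⁻ ∂P = P.real A * ∫ ω, (X i₀ ω - t)⁻ ∂P :=
    hindepA.setIntegral_eq_mul hY.comap_le (f := fun x => (x - t)⁻) (hmeas i₀).aemeasurable hA
      (by fun_prop)
  have hAm : MeasurableSet A := hY.comap_le _ hA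
  have hZ : Integrable (A.indicator fun ω => (X i₀ ω - t)⁻) P :=
    ((hint i₀).sub (integrable_const t)).neg_part.indicator hAm
  have hpoint : ∀ ω, X i₀ ω + A.indicator (fun ω => (X i₀ ω - t)⁻) ω ≤
      univ.sup' ⟨i₀, mem_univ i₀⟩ (fun i => X i ω) := by
    intro ω
    by_cases hω : ω ∈ A
    · obtain ⟨i, -, hi⟩ := id hω
      rw [Set.indicator_of_mem hω, add_negPart_sub_eq_max]
      exact max_le (le_sup' (fun i => X i ω) (mem_univ i₀))
        (hi.trans (le_sup' (fun i => X i ω) (mem_univ i)))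
    · rw [Set.indicator_of_notMem hω, add_zero]
      exact le_sup' (fun i => X i ω) (mem_univ i₀)
  calc P[X i₀] + (1 - ∏ i ∈ T, P.real {ω | X i ω < t}) * ∫ ω, (X i₀ ω - t)⁻ ∂P
      = ∫ ω, (X i₀ ω + A.indicator (fun ω => (X i₀ ω - t)⁻) ω) ∂P := by
        rw [integral_add (hint i₀) hZ, integral_indicator hAm, hsetIntegral,
          hindep.measureReal_exists_le hmeas]
    _ ≤ ∫ ω, univ.sup' ⟨i₀, mem_univ i₀⟩ (fun i => X i ω) ∂P :=
        integral_mono ((hint i₀).add hZ) (Integrable.finset_sup' _ fun i _ => hint i) hpoint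

end

/-- Let `X_0, …, X_n` be i.i.d. random variables taking values in `[0,1]`, with mean
`μ`, variance `c` and `p = P(X_0 < μ)`.  If `c > 0` then `0 < p < 1` and
`E[max(X_0, …, X_n)] ≥ μ + (p − p^{n+1})·c/2`. -/
theorem expected_max_of_iid_positive_variance
    {Ω : Type} [MeasurableSpace Ω] (P : Measure Ω) [IsProbabilityMeasure P]
    (n : ℕ) (X : Fin (n + 1) → Ω → ℝ)
    (hmeas : ∀ i, Measurable (X i))
    (hrange : ∀ i ω, X i ω ∈ Set.Icc (0 : ℝ) 1)
    (hindep : iIndepFun X P)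
    (hident : ∀ i, Measure.map (X i) P = Measure.map (X 0) P)
    (hc : 0 < variance (X 0) P) :
    (0 < (P {ω | X 0 ω < ∫ ω', X 0 ω' ∂P}).toReal ∧
      (P {ω | X 0 ω < ∫ ω', X 0 ω' ∂P}).toReal < 1) ∧
    (∫ ω', X 0 ω' ∂P) +
        ((P {ω | X 0 ω < ∫ ω', X 0 ω' ∂P}).toReal -
          (P {ω | X 0 ω < ∫ ω', X 0 ω' ∂P}).toReal ^ (n + 1)) *
          variance (X 0) P / 2 ≤
      ∫ ω, (univ.sup' univ_nonempty fun i => X i ω) ∂P := by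
  set μ := ∫ ω', X 0 ω' ∂P
  set p := P.real {ω | X 0 ω < μ}
  have hint : ∀ i, Integrable (X i) P := fun i =>
    .of_mem_Icc 0 1 (hmeas i).aemeasurable (.of_forall (hrange i))
  have hvar : variance (X 0) P ≤ 2 * ∫ ω, (X 0 ω - μ)⁻ ∂P :=
    (variance_le_integral_abs_sub_integral (hint 0)
      (.of_forall (abs_sub_integral_le_one_of_mem_Icc (hrange 0)))).trans_eq
      (integral_abs_sub_integral_eq_two_mul_integral_negPart (hint 0))
  have hp_pos : 0 < p := ENNReal.toReal_pos
    (measure_setOf_lt_pos_of_integral_negPart_sub_pos (by linarith)).ne' (measure_ne_top _ _)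
  have hp_lt_one : p < 1 := ENNReal.toReal_lt_of_lt_ofReal
    (by simpa using measure_setOf_lt_integral_lt_one (hint 0))
  have hprod : ∏ i ∈ {0}ᶜ, P.real {ω | X i ω < μ} = p ^ n := by
    have hident_lt : ∀ i, P.real {ω | X i ω < μ} = p := fun i =>
      congrArg ENNReal.toReal <|
        (IdentDistrib.mk (hmeas i).aemeasurable (hmeas 0).aemeasurable (hident i)).measure_mem_eq
          measurableSet_Iio
    rw [prod_congr rfl fun i _ => hident_lt i, prod_const, card_compl, card_singleton,
      Fintype.card_fin, Nat.add_sub_cancel]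
  have hmax := hindep.integral_add_mul_integral_negPart_le_integral_sup' hmeas hint 0 μ
  rw [hprod] at hmax
  refine ⟨⟨hp_pos, hp_lt_one⟩, ?_⟩
  have hpn : 0 ≤ 1 - p ^ n := sub_nonneg.2 (pow_le_one₀ hp_pos.le hp_lt_one.le)
  calc μ + (p - p ^ (n + 1)) * variance (X 0) P / 2
      = μ + p * ((1 - p ^ n) * (variance (X 0) P / 2)) := by ring
    _ ≤ μ + (1 - p ^ n) * (variance (X 0) P / 2) :=
        add_le_add_right (mul_le_of_le_one_left (mul_nonneg hpn (half_pos hc).le) hp_lt_one.le) μ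
    _ ≤ μ + (1 - p ^ n) * ∫ ω, (X 0 ω - μ)⁻ ∂P := by gcongr; linarith
    _ ≤ _ := hmax
end

section
/- Every fractional allocation X for this instance that is both envy-free and Pareto optimal satisfies X_{11} = 1, X_{21} = X_{31} = 0, v_2(X_2) = v_2(X_3), and v_3(X_3) = v_3(X_2) (agents 2 and 3 are indifferent to each other's bundles). In particular, no fractional allocation of this instance is simultaneously strongly envy-free and Pareto optimal, even though no two agents have identical valuations up to a multiplicative factor. -/
open Finset

/-- `X` is strongly envy-free under valuations `v`. -/
def StrongEnvyFree {n m : ℕ} (v : Fin n → Fin m → ℝ) (X : Fin n → Fin m → ℝ) : Prop :=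
  ∀ i j, i ≠ j → val v i (X j) < val v i (X i)

/-- `X` is Pareto optimal under valuations `v`. -/
def ParetoOpt {n m : ℕ} (v : Fin n → Fin m → ℝ) (X : Fin n → Fin m → ℝ) : Prop :=
  ¬ ∃ X' : Fin n → Fin m → ℝ, IsAlloc X' ∧
    (∀ i, val v i (X i) ≤ val v i (X' i)) ∧ (∃ i, val v i (X i) < val v i (X' i))

/-- The concrete 3-agent, 3-item instance with valuations
`v_1 = (1,1,1)`, `v_2 = (1/2,1,1)`, `v_3 = (1/4,1,1)`. -/
noncomputable def vEx : Fin 3 → Fin 3 → ℝ := ![![1, 1, 1], ![1/2, 1, 1], ![1/4, 1, 1]]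

lemma aux1 (X : Fin 3 → Fin 3 → ℝ) (hX : IsAlloc X)
    (hpos : 0 < X 1 0) (hs : 0 < X 0 1 + X 0 2) : ¬ ParetoOpt vEx X := by
  obtain ⟨hb, hc⟩ := hX
  have hc0 : X 0 0 + X 1 0 + X 2 0 = 1 := by simpa [Fin.sum_univ_three] using hc 0
  have hc1 : X 0 1 + X 1 1 + X 2 1 = 1 := by simpa [Fin.sum_univ_three] using hc 1
  have hc2 : X 0 2 + X 1 2 + X 2 2 = 1 := by simpa [Fin.sum_univ_three] using hc 2
  intro hPO
  apply hPO
  set s := X 0 1 + X 0 2 with hs_def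
  set ε := min (X 1 0) s with hε_def
  have hε : 0 < ε := lt_min hpos hs
  have hεa : ε ≤ X 1 0 := min_le_left _ _
  have hεs : ε ≤ s := min_le_right _ _
  have hs0 : s ≠ 0 := ne_of_gt hs
  set r1 := (3*ε/4) * X 0 1 / s with hr1
  set r2 := (3*ε/4) * X 0 2 / s with hr2
  have h01 : 0 ≤ X 0 1 := (hb 0 1).1
  have h02 : 0 ≤ X 0 2 := (hb 0 2).1
  have hr1nn : 0 ≤ r1 := by positivity
  have hr2nn : 0 ≤ r2 := by positivity
  have hr1le : r1 ≤ X 0 1 := by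
    rw [hr1, div_le_iff₀ hs]; nlinarith
  have hr2le : r2 ≤ X 0 2 := by
    rw [hr2, div_le_iff₀ hs]; nlinarith
  have hrsum : r1 + r2 = 3*ε/4 := by
    rw [hr1, hr2]; field_simp; rw [hs_def]
  refine ⟨![![X 0 0 + ε, X 0 1 - r1, X 0 2 - r2],
            ![X 1 0 - ε, X 1 1 + r1, X 1 2 + r2],
            ![X 2 0, X 2 1, X 2 2]], ⟨?_, ?_⟩, ?_, ?_⟩
  · intro p q
    have B := fun p q => (hb p q).1
    have B' := fun p q => (hb p q).2
    fin_cases p <;> fin_cases q <;> simp [Set.mem_Icc] <;>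
      constructor <;>
      linarith [B 0 0, B 0 1, B 0 2, B 1 0, B 1 1, B 1 2, B 2 0, B 2 1, B 2 2,
        B' 0 0, B' 0 1, B' 0 2, B' 1 0, B' 1 1, B' 1 2, B' 2 0, B' 2 1, B' 2 2]
  · intro q
    fin_cases q <;> simp [Fin.sum_univ_three] <;> linarith
  · intro p
    fin_cases p <;> simp [_root_.val, vEx, Fin.sum_univ_three] <;> linarith
  · refine ⟨0, ?_⟩
    simp [_root_.val, vEx, Fin.sum_univ_three]
    linarith
lemma aux2 (X : Fin 3 → Fin 3 → ℝ) (hX : IsAlloc X)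
    (hpos : 0 < X 2 0) (hs : 0 < X 0 1 + X 0 2) : ¬ ParetoOpt vEx X := by
  obtain ⟨hb, hc⟩ := hX
  have hc0 : X 0 0 + X 1 0 + X 2 0 = 1 := by simpa [Fin.sum_univ_three] using hc 0
  have hc1 : X 0 1 + X 1 1 + X 2 1 = 1 := by simpa [Fin.sum_univ_three] using hc 1
  have hc2 : X 0 2 + X 1 2 + X 2 2 = 1 := by simpa [Fin.sum_univ_three] using hc 2
  intro hPO
  apply hPO
  set s := X 0 1 + X 0 2 with hs_def
  set ε := min (X 2 0) s with hε_def
  have hε : 0 < ε := lt_min hpos hs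
  have hεa : ε ≤ X 2 0 := min_le_left _ _
  have hεs : ε ≤ s := min_le_right _ _
  have hs0 : s ≠ 0 := ne_of_gt hs
  set r1 := (3*ε/4) * X 0 1 / s with hr1
  set r2 := (3*ε/4) * X 0 2 / s with hr2
  have h01 : 0 ≤ X 0 1 := (hb 0 1).1
  have h02 : 0 ≤ X 0 2 := (hb 0 2).1
  have hr1nn : 0 ≤ r1 := by positivity
  have hr2nn : 0 ≤ r2 := by positivity
  have hr1le : r1 ≤ X 0 1 := by
    rw [hr1, div_le_iff₀ hs]; nlinarith
  have hr2le : r2 ≤ X 0 2 := by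
    rw [hr2, div_le_iff₀ hs]; nlinarith
  have hrsum : r1 + r2 = 3*ε/4 := by
    rw [hr1, hr2]; field_simp; rw [hs_def]
  refine ⟨![![X 0 0 + ε, X 0 1 - r1, X 0 2 - r2],
            ![X 1 0, X 1 1, X 1 2],
            ![X 2 0 - ε, X 2 1 + r1, X 2 2 + r2]], ⟨?_, ?_⟩, ?_, ?_⟩
  · intro p q
    have B := fun p q => (hb p q).1
    have B' := fun p q => (hb p q).2
    fin_cases p <;> fin_cases q <;> simp [Set.mem_Icc] <;>
      constructor <;>
      linarith [B 0 0, B 0 1, B 0 2, B 1 0, B 1 1, B 1 2, B 2 0, B 2 1, B 2 2,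
        B' 0 0, B' 0 1, B' 0 2, B' 1 0, B' 1 1, B' 1 2, B' 2 0, B' 2 1, B' 2 2]
  · intro q
    fin_cases q <;> simp [Fin.sum_univ_three] <;> linarith
  · intro p
    fin_cases p <;> simp [_root_.val, vEx, Fin.sum_univ_three] <;> linarith
  · refine ⟨0, ?_⟩
    simp [_root_.val, vEx, Fin.sum_univ_three]
    linarith

lemma key (X : Fin 3 → Fin 3 → ℝ) (hX : IsAlloc X) (hEF : EnvyFree vEx X)
    (hPO : ParetoOpt vEx X) :
    X 0 0 = 1 ∧ X 1 0 = 0 ∧ X 2 0 = 0 ∧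
      val vEx 1 (X 1) = val vEx 1 (X 2) ∧ val vEx 2 (X 2) = val vEx 2 (X 1) := by
  obtain ⟨hb, hc⟩ := hX
  have hc0 : X 0 0 + X 1 0 + X 2 0 = 1 := by simpa [Fin.sum_univ_three] using hc 0
  have hc1 : X 0 1 + X 1 1 + X 2 1 = 1 := by simpa [Fin.sum_univ_three] using hc 1
  have hc2 : X 0 2 + X 1 2 + X 2 2 = 1 := by simpa [Fin.sum_univ_three] using hc 2
  have B := fun p q => (hb p q).1
  have B' := fun p q => (hb p q).2
  have h00 : X 0 0 = 1 := by
    by_contra h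
    have h' : X 0 0 < 1 := lt_of_le_of_ne (B' 0 0) h
    have hs : 0 < X 0 1 + X 0 2 := by
      by_contra hsn
      push_neg at hsn
      have e1 := hEF 0 1
      have e2 := hEF 0 2
      simp [_root_.val, vEx, Fin.sum_univ_three] at e1 e2
      linarith [B 0 1, B 0 2]
    rcases lt_or_ge 0 (X 1 0) with h1 | h1
    · exact aux1 X ⟨hb, hc⟩ h1 hs hPO
    · have h2 : 0 < X 2 0 := by linarith [B 1 0]
      exact aux2 X ⟨hb, hc⟩ h2 hs hPO
  have h10 : X 1 0 = 0 := by linarith [B 1 0, B 2 0]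
  have h20 : X 2 0 = 0 := by linarith [B 1 0, B 2 0]
  have e1 := hEF 1 2
  have e2 := hEF 2 1
  refine ⟨h00, h10, h20, ?_, ?_⟩ <;>
    simp [_root_.val, vEx, Fin.sum_univ_three, h10, h20] at e1 e2 ⊢ <;> linarith

/-- In the instance `vEx`, every envy-free and Pareto optimal fractional allocation
gives all of item 1 to agent 1 and makes agents 2 and 3 indifferent to each other's
bundles.  In particular no fractional allocation is simultaneously strongly envy-free
and Pareto optimal, even though no two agents have identical valuations up to a
positive multiplicative factor. -/
theorem strongEF_PO_incompatible_example :
    (∀ X : Fin 3 → Fin 3 → ℝ, IsAlloc X → EnvyFree vEx X → ParetoOpt vEx X →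
      X 0 0 = 1 ∧ X 1 0 = 0 ∧ X 2 0 = 0 ∧
      val vEx 1 (X 1) = val vEx 1 (X 2) ∧ val vEx 2 (X 2) = val vEx 2 (X 1)) ∧
    (¬ ∃ X : Fin 3 → Fin 3 → ℝ, IsAlloc X ∧ StrongEnvyFree vEx X ∧ ParetoOpt vEx X) ∧
    (∀ i j : Fin 3, i ≠ j → ¬ ∃ c : ℝ, 0 < c ∧ ∀ k, vEx i k = c * vEx j k) := by
  refine ⟨fun X hX hEF hPO => key X hX hEF hPO, ?_, ?_⟩
  · rintro ⟨X, hX, hSEF, hPO⟩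
    have hEF : EnvyFree vEx X := fun i j => by
      rcases eq_or_ne i j with rfl | h
      · exact le_refl _
      · exact le_of_lt (hSEF i j h)
    obtain ⟨_, _, _, h12, _⟩ := key X hX hEF hPO
    exact absurd h12 (ne_of_gt (hSEF 1 2 (by decide)))
  · rintro i j hij ⟨c, hc, h⟩
    have h0 := h 0
    have h1 := h 1
    fin_cases i <;> fin_cases j <;>
      simp [vEx, Matrix.vecHead, Matrix.vecTail] at h0 h1 hij <;> linarith
end
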